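/- arXiv:1401.2715 — 12 statements merged into one kernel-verified Lean document; each statement's English description precedes it below -/
import Mathlib

section
/- If W : ℝ → ℝ satisfies that W is convex on [0, θ) for some θ > 0, W is convex on [M, ∞) for some M > 0, and W' = σ is Lipschitz continuous with constant L on [θ/2, 2M], then W is λ-convex on [0, ∞) for some λ > 0, i.e., the function p ↦ W(p) + (λ/2) p² is convex on [0, ∞). -/
/-!
Take `λ = L + 1` and `F p = W p + λ/2 p²`, so that `F' = σ + λ·id` on `(0, ∞)`. This derivative is
monotone on each of `(0, θ)` and `[M, ∞)`, where `W` is convex, and on `[θ/2, 2M]`, where the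
Lipschitz bound on `σ` is absorbed by `λ ≥ L`. These overlapping pieces cover `(0, ∞)`, so `F` is
convex there; since `F` is also convex on `[0, θ)`, convexity extends to the endpoint `0`.
-/

open Set NNReal

theorem ConvexOn.monotoneOn_of_hasDerivAt {f f' : ℝ → ℝ} {s : Set ℝ} (hf : ConvexOn ℝ s f)
    (hf' : ∀ x ∈ s, HasDerivAt f (f' x) x) : MonotoneOn f' s := by
  intro x hx y hy hxy
  rcases hxy.eq_or_lt with rfl | hxy
  · rfl
  · exact (hf.le_slope_of_hasDerivAt hx hy hxy (hf' x hx)).trans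
      (hf.slope_le_of_hasDerivAt hx hy hxy (hf' y hy))

theorem MonotoneOn.convexOn_of_hasDerivAt {f f' : ℝ → ℝ} {D : Set ℝ} (hD : Convex ℝ D)
    (hf : ∀ x ∈ D, HasDerivAt f (f' x) x) (hf'_mono : MonotoneOn f' D) : ConvexOn ℝ D f := by
  refine MonotoneOn.convexOn_of_deriv hD (fun x hx ↦ (hf x hx).continuousAt.continuousWithinAt)
    (fun x hx ↦ (hf x (interior_subset hx)).differentiableAt.differentiableWithinAt) ?_
  intro x hx y hy hxy
  rw [(hf x (interior_subset hx)).deriv, (hf y (interior_subset hy)).deriv]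
  exact hf'_mono (interior_subset hx) (interior_subset hy) hxy

theorem LipschitzOnWith.monotoneOn_add_mul {f : ℝ → ℝ} {K : ℝ≥0} {s : Set ℝ} {c : ℝ}
    (hf : LipschitzOnWith K f s) (hc : (K : ℝ) ≤ c) : MonotoneOn (fun x ↦ f x + c * x) s := by
  intro x hx y hy hxy
  have hdist := (le_abs_self _).trans (hf.dist_le_mul x hx y hy)
  rw [Real.dist_eq, abs_sub_comm x y, abs_of_nonneg (sub_nonneg.2 hxy)] at hdist
  have := mul_le_mul_of_nonneg_right hc (sub_nonneg.2 hxy)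
  show f x + c * x ≤ f y + c * y
  linarith

theorem monotoneOn_Ioi_of_monotoneOn_Ioo_Icc_Ici {g : ℝ → ℝ} {θ M : ℝ} (hθ : 0 < θ) (hM : 0 < M)
    (h₁ : MonotoneOn g (Ioo 0 θ)) (h₂ : MonotoneOn g (Icc (θ / 2) (2 * M)))
    (h₃ : MonotoneOn g (Ici M)) : MonotoneOn g (Ioi 0) := by
  rcases le_or_gt (θ / 2) (2 * M) with h | h
  · have h₁₂ : MonotoneOn g (Ioc 0 (2 * M)) := by
      rw [← Ioc_union_Icc_eq_Ioc (by positivity) h]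
      exact (h₁.mono (Ioc_subset_Ioo_right (by linarith))).union_right h₂
        (isGreatest_Ioc (by positivity)) (isLeast_Icc h)
    rw [← Ioc_union_Ici_eq_Ioi (by positivity : (0 : ℝ) < 2 * M)]
    exact h₁₂.union_right (h₃.mono (Ici_subset_Ici.2 (by linarith)))
      (isGreatest_Ioc (by positivity)) isLeast_Ici
  · rw [← Ioc_union_Ici_eq_Ioi hM]
    exact (h₁.mono (Ioc_subset_Ioo_right (by linarith))).union_right h₃ (isGreatest_Ioc hM)
      isLeast_Ici

theorem ConvexOn.Ici_of_Ico_of_Ioi {f : ℝ → ℝ} {a b : ℝ} (hab : a < b)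
    (h₁ : ConvexOn ℝ (Ico a b) f) (h₂ : ConvexOn ℝ (Ioi a) f) : ConvexOn ℝ (Ici a) f := by
  refine convexOn_of_slope_mono_adjacent (convex_Ici a) fun {x y z} hx hz hxy hyz ↦ ?_
  rcases (mem_Ici.mp hx).eq_or_lt with rfl | hax
  · -- With `a < c < d < min y b`, convexity on `[a, b)` links the slope from `a` to one in `(a, ∞)`.
    obtain ⟨c, hac, hc⟩ := exists_between (lt_min hxy hab)
    obtain ⟨d, hcd, hd⟩ := exists_between hc
    have hcy : c < y := hc.trans_le (min_le_left _ _)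
    have hdy : d < y := hd.trans_le (min_le_left _ _)
    have hac_cd := h₁.slope_mono_adjacent ⟨le_rfl, hab⟩ ⟨(hac.trans hcd).le,
      hd.trans_le (min_le_right _ _)⟩ hac hcd
    have hcd_cy := h₂.secant_mono (a := c) hac (hac.trans hcd) (hac.trans hcy) hcd.ne'
      hcy.ne' hdy.le
    have hcy_yz := h₂.slope_mono_adjacent hac (hxy.trans hyz) hcy hyz
    set S := (f z - f y) / (z - y)
    have hac_S : f c - f a ≤ S * (c - a) :=
      (div_le_iff₀ (sub_pos.2 hac)).1 (hac_cd.trans (hcd_cy.trans hcy_yz))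
    have hcy_S : f y - f c ≤ S * (y - c) := (div_le_iff₀ (sub_pos.2 hcy)).1 hcy_yz
    rw [div_le_iff₀ (sub_pos.2 hxy)]
    linarith
  · exact h₂.slope_mono_adjacent hax (hax.trans (hxy.trans hyz)) hxy hyz

/-- If `W` is convex on `[0, θ)` for some `θ > 0`, convex on `[M, ∞)` for some `M > 0`,
differentiable on `(0, ∞)` with derivative `σ`, and `σ` is Lipschitz with constant `L` on
`[θ/2, 2M]`, then `W` is `λ`-convex on `[0, ∞)` for some `λ > 0`. -/
theorem stmt0 (W σ : ℝ → ℝ) (θ M : ℝ) (hθ : 0 < θ) (hM : 0 < M)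
    (hconv1 : ConvexOn ℝ (Set.Ico 0 θ) W)
    (hconv2 : ConvexOn ℝ (Set.Ici M) W)
    (hderiv : ∀ p ∈ Set.Ioi (0:ℝ), HasDerivAt W (σ p) p)
    (L : NNReal) (hlip : LipschitzOnWith L σ (Set.Icc (θ/2) (2*M))) :
    ∃ lam : ℝ, 0 < lam ∧ ConvexOn ℝ (Set.Ici 0) (fun p => W p + lam / 2 * p ^ 2) := by
  set lam : ℝ := L + 1
  have hlam : 0 < lam := by positivity
  refine ⟨lam, hlam, ?_⟩
  have hlinear : Monotone fun p : ℝ ↦ lam * p := monotone_mul_left_of_nonneg hlam.le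
  have hmono : MonotoneOn (fun p ↦ σ p + lam * p) (Ioi 0) := by
    refine monotoneOn_Ioi_of_monotoneOn_Ioo_Icc_Ici hθ hM ?_
      (hlip.monotoneOn_add_mul (by simp [lam])) ?_
    · exact ((hconv1.subset Ioo_subset_Ico_self (convex_Ioo 0 θ)).monotoneOn_of_hasDerivAt
        fun p hp ↦ hderiv p hp.1).add (hlinear.monotoneOn _)
    · exact (hconv2.monotoneOn_of_hasDerivAt fun p hp ↦ hderiv p (hM.trans_le hp)).add
        (hlinear.monotoneOn _)
  have hconvIoi : ConvexOn ℝ (Ioi 0) (fun p ↦ W p + lam / 2 * p ^ 2) := by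
    refine hmono.convexOn_of_hasDerivAt (convex_Ioi 0) fun p hp ↦ ?_
    exact (hderiv p hp).add (((hasDerivAt_pow 2 p).const_mul (lam / 2)).congr_deriv (by ring))
  have hquad : ConvexOn ℝ (Ico 0 θ) (fun p : ℝ ↦ lam / 2 * p ^ 2) :=
    ((Even.convexOn_pow even_two).subset (subset_univ _) (convex_Ico 0 θ)).smul
      (by positivity : 0 ≤ lam / 2)
  exact (hconv1.add hquad).Ici_of_Ico_of_Ioi hθ hconvIoi
end

section
/- Suppose σ : (0,∞) → ℝ is continuous, there exists θ > 0 and α > 0 such that σ is differentiable on (0,θ) with σ'(p) ≥ α for all p ∈ (0,θ), σ(p) → −∞ as p → 0+, and there exists c > 0 with σ(p)/p ≥ c for all p > 1/θ. Then there exist positive constants C and ε₀ such that for all p > 0 and all δ ∈ (0, ε₀] with p ≠ δ, (σ(p) − σ(δ))/(p − δ) > C. -/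
/-!
Fix `0 < C < min α c` and put `g p = σ p - C p`; a slope of `σ` exceeds `C` exactly when `g`
increases between the two points. On `(0, θ)` the derivative of `g` is `σ' - C > 0`, so `g` is
strictly increasing there. On `[θ, ∞)` it is bounded below, by compactness on `[θ, 1/θ]` and by
`σ p ≥ c p ≥ C p` beyond. Since `σ δ → -∞` as `δ → 0+`, every small `δ` has `g δ` below that bound.
-/

open Set Filter Topology

theorem lt_div_sub_of_sub_mul_lt {f : ℝ → ℝ} {C x y : ℝ} (hxy : x < y)
    (h : f x - C * x < f y - C * y) : C < (f y - f x) / (y - x) := by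
  rw [lt_div_iff₀ (sub_pos.2 hxy)]
  linarith

theorem lt_div_sub_of_strictMonoOn {f : ℝ → ℝ} {C x y : ℝ} {s : Set ℝ}
    (hf : StrictMonoOn (fun t => f t - C * t) s) (hx : x ∈ s) (hy : y ∈ s) (hxy : x ≠ y) :
    C < (f y - f x) / (y - x) := by
  rcases hxy.lt_or_gt with hlt | hgt
  · exact lt_div_sub_of_sub_mul_lt hlt (hf hx hy hlt)
  · rw [← neg_div_neg_eq, neg_sub, neg_sub]
    exact lt_div_sub_of_sub_mul_lt hgt (hf hy hx hgt)

theorem strictMonoOn_sub_mul_of_lt_deriv {f f' : ℝ → ℝ} {a b C : ℝ}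
    (hf : ∀ x ∈ Ioo a b, HasDerivAt f (f' x) x ∧ C < f' x) :
    StrictMonoOn (fun t => f t - C * t) (Ioo a b) := by
  have hderiv : ∀ x ∈ Ioo a b, HasDerivAt (fun t => f t - C * t) (f' x - C) x := fun x hx => by
    simpa using (hf x hx).1.fun_sub ((hasDerivAt_id x).const_mul C)
  refine strictMonoOn_of_hasDerivWithinAt_pos (f' := fun x => f' x - C) (convex_Ioo a b)
    (fun x hx => (hderiv x hx).continuousAt.continuousWithinAt) (fun x hx => ?_) (fun x hx => ?_)
  · rw [interior_Ioo] at hx ⊢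
    exact (hderiv x hx).hasDerivWithinAt
  · rw [interior_Ioo] at hx
    exact sub_pos.2 (hf x hx).2

theorem exists_add_mul_le_of_le_div {f : ℝ → ℝ} {a R c C : ℝ} (ha : 0 < a)
    (hcont : ContinuousOn f (Icc a R)) (hR : ∀ p, R < p → c ≤ f p / p) (hC : C ≤ c) :
    ∃ L, ∀ p, a ≤ p → L + C * p ≤ f p := by
  obtain ⟨L, hL⟩ :=
    isCompact_Icc.bddBelow_image (hcont.sub (continuousOn_const.mul continuousOn_id))
  refine ⟨min L 0, fun p hp => ?_⟩
  rcases le_or_gt p R with hpR | hpR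
  · have : L ≤ f p - C * p := hL ⟨p, ⟨hp, hpR⟩, rfl⟩
    linarith [min_le_left L 0]
  · have hp0 : 0 < p := ha.trans_le hp
    have hcp : c * p ≤ f p := (le_div_iff₀ hp0).1 (hR p hpR)
    linarith [mul_le_mul_of_nonneg_right hC hp0.le, min_le_right L 0]

/-- Under (H1)-type continuity, (L1): `σ' ≥ α > 0` on `(0,θ)`, (H2): `σ(p) → −∞` as `p → 0+`,
and (L2): `σ(p)/p ≥ c > 0` for `p > 1/θ`, there exist `C, ε₀ > 0` such that
`(σ(p) − σ(δ))/(p − δ) > C` for all `p > 0`, `0 < δ ≤ ε₀`, `p ≠ δ`. -/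
theorem stmt2 (σ σ' : ℝ → ℝ) (θ α c : ℝ) (hθ : 0 < θ) (hα : 0 < α) (hc : 0 < c)
    (hcont : ContinuousOn σ (Set.Ioi 0))
    (hL1 : ∀ p ∈ Set.Ioo (0:ℝ) θ, HasDerivAt σ (σ' p) p ∧ α ≤ σ' p)
    (hH2 : Filter.Tendsto σ (nhdsWithin 0 (Set.Ioi 0)) Filter.atBot)
    (hL2 : ∀ p : ℝ, 1/θ < p → c ≤ σ p / p) :
    ∃ C ε₀ : ℝ, 0 < C ∧ 0 < ε₀ ∧
      ∀ p δ : ℝ, 0 < p → 0 < δ → δ ≤ ε₀ → p ≠ δ →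
        (σ p - σ δ) / (p - δ) > C := by
  obtain ⟨C, hC, hCα, hCc⟩ : ∃ C, 0 < C ∧ C < α ∧ C ≤ c :=
    ⟨min α c / 2, by positivity, by linarith [min_le_left α c, lt_min hα hc],
      by linarith [min_le_right α c, lt_min hα hc]⟩
  have hmono : StrictMonoOn (fun t => σ t - C * t) (Ioo 0 θ) :=
    strictMonoOn_sub_mul_of_lt_deriv fun p hp => ⟨(hL1 p hp).1, hCα.trans_le (hL1 p hp).2⟩
  obtain ⟨L, hL⟩ := exists_add_mul_le_of_le_div hθ
    (hcont.mono fun x hx => hθ.trans_le hx.1) hL2 hCc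
  have hsmall : ∀ᶠ δ in 𝓝[>] 0, σ δ < L ∧ δ < θ :=
    (hH2.eventually (eventually_lt_atBot L)).and
      ((eventually_lt_nhds hθ).filter_mono nhdsWithin_le_nhds)
  obtain ⟨ε₀, hε₀, hε₀small⟩ := mem_nhdsGT_iff_exists_Ioc_subset.1 hsmall
  refine ⟨C, ε₀, hC, hε₀, fun p δ hp hδ hδε hpδ => ?_⟩
  obtain ⟨hσδ, hδθ⟩ : σ δ < L ∧ δ < θ := hε₀small ⟨hδ, hδε⟩
  rcases lt_or_ge p θ with hpθ | hpθ
  · exact lt_div_sub_of_strictMonoOn hmono ⟨hδ, hδθ⟩ ⟨hp, hpθ⟩ hpδ.symm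
  · refine lt_div_sub_of_sub_mul_lt (hδθ.trans_le hpθ) ?_
    linarith [hL p hpθ, mul_pos hC hδ]
end

section
/- Suppose σ : (0,∞) → ℝ is continuous, σ(p)/p → ∞ as p → ∞, σ(p) → −∞ as p → 0+, σ is nondecreasing on [M₀, ∞) and positive there, and μ > 0. Then for all sufficiently large γ > 0: for every p with 0 < p ≤ γ, one has σ(γ)/(2μ) > σ(p)/p − σ(γ)/γ. -/
/-!
Split `(0, γ]` at `M = max M₀ (2μ)`. On `(0, M]` the quotient `σ p / p` is bounded above by some
`C`: it is nonpositive near `0` and continuous on the compact rest. Superlinearity makes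
`σ γ / γ > C` for large `γ`, which settles this range. For `M < p ≤ γ`, monotonicity gives
`σ p / p ≤ σ γ / p ≤ σ γ / (2μ)`, and `σ γ / γ > 0` makes the inequality strict.
-/

open Set Filter Topology

lemma exists_forall_Ioc_div_self_le {σ : ℝ → ℝ} (hcont : ContinuousOn σ (Ioi 0))
    (hbot : Tendsto σ (𝓝[>] 0) atBot) (M : ℝ) :
    ∃ C, ∀ p ∈ Ioc 0 M, σ p / p ≤ C := by
  obtain ⟨δ, hδ, hδneg⟩ := mem_nhdsGT_iff_exists_Ioo_subset.mp
    (hbot.eventually (eventually_le_atBot 0))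
  have hδpos : (0 : ℝ) < δ := hδ
  have hIcc : Icc δ M ⊆ Ioi 0 := fun x hx => hδpos.trans_le hx.1
  obtain ⟨C, hC⟩ : BddAbove ((fun p => σ p / p) '' Icc δ M) :=
    isCompact_Icc.bddAbove_image <|
      (hcont.mono hIcc).div continuousOn_id fun x hx => (hIcc hx).ne'
  refine ⟨max C 0, fun p ⟨hp, hpM⟩ => ?_⟩
  rcases lt_or_ge p δ with hpδ | hδp
  · exact (div_nonpos_of_nonpos_of_nonneg (hδneg ⟨hp, hpδ⟩) hp.le).trans (le_max_right _ _)
  · exact (hC ⟨p, ⟨hδp, hpM⟩, rfl⟩).trans (le_max_left _ _)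

lemma div_self_sub_div_self_lt_of_monotoneOn {σ : ℝ → ℝ} {M₀ μ p γ : ℝ}
    (hmono : MonotoneOn σ (Ici M₀)) (hpos : ∀ p, M₀ ≤ p → 0 < σ p)
    (hp : max M₀ (2 * μ) ≤ p) (hpγ : p ≤ γ) (hμ : 0 < μ) :
    σ p / p - σ γ / γ < σ γ / (2 * μ) := by
  have hM₀p : M₀ ≤ p := (le_max_left _ _).trans hp
  have h2μp : 2 * μ ≤ p := (le_max_right _ _).trans hp
  have hσγ : 0 < σ γ := hpos γ (hM₀p.trans hpγ)
  have hγ : 0 < γ := by linarith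
  calc σ p / p - σ γ / γ < σ p / p := sub_lt_self _ (div_pos hσγ hγ)
    _ ≤ σ γ / p := div_le_div_of_nonneg_right (hmono hM₀p (hM₀p.trans hpγ) hpγ) (by linarith)
    _ ≤ σ γ / (2 * μ) := div_le_div_of_nonneg_left hσγ.le (by linarith) h2μp

/-- If `σ` is continuous on `(0,∞)` with `σ(p)/p → ∞` as `p → ∞`, `σ(p) → −∞` as `p → 0+`,
`σ` nondecreasing and positive on `[M₀,∞)`, and `μ > 0`, then for all sufficiently large `γ`:
for every `0 < p ≤ γ` one has `σ(γ)/(2μ) > σ(p)/p − σ(γ)/γ`. -/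
theorem stmt4 (σ : ℝ → ℝ) (M₀ μ : ℝ) (hμ : 0 < μ)
    (hcont : ContinuousOn σ (Set.Ioi 0))
    (hsup : Filter.Tendsto (fun p => σ p / p) Filter.atTop Filter.atTop)
    (hH2 : Filter.Tendsto σ (nhdsWithin 0 (Set.Ioi 0)) Filter.atBot)
    (hmono : MonotoneOn σ (Set.Ici M₀))
    (hpos : ∀ p, M₀ ≤ p → 0 < σ p) :
    ∃ Γ : ℝ, 0 < Γ ∧ ∀ γ : ℝ, Γ ≤ γ → ∀ p : ℝ, 0 < p → p ≤ γ →
      σ γ / (2 * μ) > σ p / p - σ γ / γ := by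
  set M := max M₀ (2 * μ)
  obtain ⟨C, hC⟩ := exists_forall_Ioc_div_self_le hcont hH2 M
  obtain ⟨Γ, hΓ⟩ := (hsup.eventually_gt_atTop C).exists_forall_of_atTop
  have hM : 0 < M := (by linarith : (0 : ℝ) < 2 * μ).trans_le (le_max_right _ _)
  refine ⟨max Γ M, hM.trans_le (le_max_right _ _), fun γ hγ p hp hpγ => ?_⟩
  have hMγ : M ≤ γ := (le_max_right _ _).trans hγ
  rcases le_or_gt p M with hpM | hMp
  · have hσγ : 0 < σ γ / (2 * μ) :=
      div_pos (hpos γ ((le_max_left _ _).trans hMγ)) (by linarith)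
    linarith [hC p ⟨hp, hpM⟩, hΓ γ ((le_max_left _ _).trans hγ)]
  · exact div_self_sub_div_self_lt_of_monotoneOn hmono hpos hMp.le hpγ hμ
end

section
/- Let σ : (0,∞) → ℝ be locally Lipschitz with σ(p) → −∞ as p → 0+ and σ(p) > 0 for all sufficiently large p. Let p₋ > 0 be the smallest root of σ. Define g(p) = ∫₀^p (−1/σ(z)) dz for 0 < p < p₋ (which is finite, continuous, strictly increasing, and g(p) → 0 as p → 0+). Then any solution p(t) of the ODE p'(t) = −σ(p(t)) with p(0) = p₀ ≥ 0 satisfies p(t) ≥ min{p₋, g⁻¹(t)} for all t > 0. -/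
/-!
Write `g = riseTime σ`: it is the time the flow of `p' = -σ(p)` needs to climb from `0` to `q`.
Since `σ(q) < 0`, a solution that is at or above `q` stays there, so if `p t < q` then `p` stays
below `q < p₋` on all of `(0, t]`. There `g(p(s)) - s` is constant by the chain rule, and
`g ≥ 0`, so `t ≤ g(p t)`. But `g` is strictly increasing on `(0, p₋)`, so `g(p t) < g(q) ≤ t`.
-/

open MeasureTheory intervalIntegral Set Filter Topology

lemma locallyLipschitzOn_of_forall_ball {σ : ℝ → ℝ} {s : Set ℝ}
    (h : ∀ x ∈ s, ∃ ε > 0, ∃ L : NNReal, LipschitzOnWith L σ (Metric.ball x ε ∩ s)) :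
    LocallyLipschitzOn s σ := fun x hx => by
  obtain ⟨ε, hε, L, hL⟩ := h x hx
  exact ⟨L, _, inter_mem (mem_nhdsWithin_of_mem_nhds (Metric.ball_mem_nhds x hε))
    self_mem_nhdsWithin, hL⟩

lemma neg_on_Ioo_of_tendsto_atBot {σ : ℝ → ℝ} {c : ℝ} (hσ : ContinuousOn σ (Ioo 0 c))
    (hlim : Tendsto σ (𝓝[>] 0) atBot) (hroot : ∀ x ∈ Ioo 0 c, σ x ≠ 0) :
    ∀ x ∈ Ioo 0 c, σ x < 0 := by
  intro x hx
  obtain ⟨y, hσy, hy⟩ :=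
    ((hlim.eventually (eventually_lt_atBot 0)).and (Ioo_mem_nhdsGT hx.1)).exists
  by_contra! hσx
  obtain ⟨z, hz, hσz⟩ := intermediate_value_Icc hy.2.le
    (hσ.mono (Icc_subset_Ioo hy.1 hx.2)) ⟨hσy.le, hσx⟩
  exact hroot z ⟨hy.1.trans_le hz.1, hz.2.trans_lt hx.2⟩ hσz

lemma intervalIntegrable_of_continuousOn_Ioc_of_tendsto {E : Type*} [NormedAddCommGroup E]
    {f : ℝ → E} {a b : ℝ} {l : E} (hab : a ≤ b) (hf : ContinuousOn f (Ioc a b))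
    (hlim : Tendsto f (𝓝[>] a) (𝓝 l)) : IntervalIntegrable f volume a b := by
  -- Redefining `f` at `a` as `l` makes it continuous on `[a, b]`.
  have hcont : ContinuousOn (Function.update f a l) (Icc a b) := by
    intro x hx
    rcases eq_or_lt_of_le hx.1 with rfl | hax
    · rw [continuousWithinAt_update_same]
      exact hlim.mono_left (nhdsWithin_mono _ fun y hy => lt_of_le_of_ne hy.1.1 (Ne.symm hy.2))
    · have hne : ∀ᶠ y in 𝓝[Icc a b] x, y ≠ a :=
        nhdsWithin_le_nhds (isOpen_ne.mem_nhds hax.ne')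
      refine ((hf x ⟨hax, hx.2⟩).mono_of_mem_nhdsWithin ?_).congr_of_eventuallyEq ?_ ?_
      · filter_upwards [self_mem_nhdsWithin, hne] with y hy hya
        exact ⟨lt_of_le_of_ne hy.1 (Ne.symm hya), hy.2⟩
      · filter_upwards [hne] with y hya using Function.update_of_ne hya _ _
      · exact Function.update_of_ne hax.ne' _ _
  rw [intervalIntegrable_iff_integrableOn_Ioc_of_le hab]
  refine (hcont.integrableOn_Icc.mono_set Ioc_subset_Icc_self).congr_fun
    (fun x hx => Function.update_of_ne hx.1.ne' _ _) measurableSet_Ioc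

lemma level_le_of_hasDerivAt_of_neg {σ p : ℝ → ℝ} {a b q : ℝ} (hab : a ≤ b)
    (hp : ∀ s ∈ Icc a b, HasDerivAt p (-σ (p s)) s) (hq : σ q < 0) (ha : q ≤ p a) :
    q ≤ p b := by
  have := image_le_of_deriv_right_lt_deriv_boundary (f := fun s => -p s) (B := fun _ => -q)
    (fun s hs => (hp s hs).continuousAt.neg.continuousWithinAt)
    (fun s hs => (hp s (Ico_subset_Icc_self hs)).neg.hasDerivWithinAt) (neg_le_neg ha)
    (fun _ => hasDerivAt_const _ _) (fun s _ hs => by rwa [neg_neg, neg_inj.mp hs]) (right_mem_Icc.mpr hab)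
  exact neg_le_neg_iff.mp this

noncomputable def riseTime (σ : ℝ → ℝ) (q : ℝ) : ℝ := ∫ z in (0 : ℝ)..q, -(1 / σ z)

section riseTime

variable {σ : ℝ → ℝ} {c : ℝ}

lemma intervalIntegrable_riseTime (hσ : ContinuousOn σ (Ioo 0 c))
    (hlim : Tendsto σ (𝓝[>] 0) atBot) (hneg : ∀ x ∈ Ioo 0 c, σ x < 0) {q : ℝ}
    (hq : q ∈ Ioo 0 c) : IntervalIntegrable (fun z => -(1 / σ z)) volume 0 q := by
  refine intervalIntegrable_of_continuousOn_Ioc_of_tendsto hq.1.le ?_ (l := 0) ?_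
  · exact ((continuousOn_const.div hσ fun x hx => (hneg x hx).ne).neg).mono
      (Ioc_subset_Ioo_right hq.2)
  · simpa using hlim.inv_tendsto_atBot.neg

lemma hasDerivAt_riseTime (hσ : ContinuousOn σ (Ioo 0 c))
    (hlim : Tendsto σ (𝓝[>] 0) atBot) (hneg : ∀ x ∈ Ioo 0 c, σ x < 0) {x : ℝ}
    (hx : x ∈ Ioo 0 c) : HasDerivAt (riseTime σ) (-(1 / σ x)) x := by
  have hcont : ContinuousOn (fun z => -(1 / σ z)) (Ioo 0 c) :=
    (continuousOn_const.div hσ fun x hx => (hneg x hx).ne).neg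
  exact integral_hasDerivAt_right (intervalIntegrable_riseTime hσ hlim hneg hx)
    (hcont.stronglyMeasurableAtFilter isOpen_Ioo x hx) (hcont.continuousAt (isOpen_Ioo.mem_nhds hx))

lemma riseTime_pos (hσ : ContinuousOn σ (Ioo 0 c))
    (hlim : Tendsto σ (𝓝[>] 0) atBot) (hneg : ∀ x ∈ Ioo 0 c, σ x < 0) {q : ℝ}
    (hq : q ∈ Ioo 0 c) : 0 < riseTime σ q :=
  intervalIntegral_pos_of_pos_on (intervalIntegrable_riseTime hσ hlim hneg hq)
    (fun z hz => by simpa using hneg z ⟨hz.1, hz.2.trans hq.2⟩) hq.1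

lemma strictMonoOn_riseTime (hσ : ContinuousOn σ (Ioo 0 c))
    (hlim : Tendsto σ (𝓝[>] 0) atBot) (hneg : ∀ x ∈ Ioo 0 c, σ x < 0) :
    StrictMonoOn (riseTime σ) (Ioo 0 c) := by
  have hderiv := fun x (hx : x ∈ Ioo 0 c) => hasDerivAt_riseTime hσ hlim hneg hx
  refine strictMonoOn_of_hasDerivWithinAt_pos (convex_Ioo 0 c)
    (fun x hx => (hderiv x hx).continuousAt.continuousWithinAt) (f' := fun x => -(1 / σ x))
    (fun x hx => (hderiv x (interior_subset hx)).hasDerivWithinAt) fun x hx => ?_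
  simpa using hneg x (interior_subset hx)

lemma riseTime_comp_sub (hσ : ContinuousOn σ (Ioo 0 c))
    (hlim : Tendsto σ (𝓝[>] 0) atBot) (hneg : ∀ x ∈ Ioo 0 c, σ x < 0) {p : ℝ → ℝ} {a b : ℝ}
    (hab : a ≤ b) (hp : ∀ s ∈ Icc a b, HasDerivAt p (-σ (p s)) s)
    (hpc : ∀ s ∈ Icc a b, p s ∈ Ioo 0 c) :
    riseTime σ (p b) - riseTime σ (p a) = b - a := by
  have hderiv : ∀ s ∈ uIcc a b, HasDerivAt (riseTime σ ∘ p) 1 s := by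
    intro s hs
    rw [uIcc_of_le hab] at hs
    have hσs : σ (p s) ≠ 0 := (hneg _ (hpc s hs)).ne
    have h := (hasDerivAt_riseTime hσ hlim hneg (hpc s hs)).comp s (hp s hs)
    rwa [neg_mul_neg, one_div, inv_mul_cancel₀ hσs] at h
  simpa using (integral_eq_sub_of_hasDerivAt hderiv intervalIntegrable_const).symm

lemma le_riseTime_apply (hσ : ContinuousOn σ (Ioo 0 c))
    (hlim : Tendsto σ (𝓝[>] 0) atBot) (hneg : ∀ x ∈ Ioo 0 c, σ x < 0) {p : ℝ → ℝ} {t : ℝ}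
    (ht : 0 < t) (hp : ∀ s ∈ Ioc 0 t, HasDerivAt p (-σ (p s)) s)
    (hpc : ∀ s ∈ Ioc 0 t, p s ∈ Ioo 0 c) : t ≤ riseTime σ (p t) := by
  have hlim_sub : Tendsto (fun ε => t - ε) (𝓝[>] 0) (𝓝 t) :=
    ((continuous_sub_left t).tendsto' 0 t (sub_zero t)).mono_left nhdsWithin_le_nhds
  refine le_of_tendsto hlim_sub ?_
  filter_upwards [Ioo_mem_nhdsGT ht] with ε hε
  have hsub : Icc ε t ⊆ Ioc 0 t := Icc_subset_Ioc_iff hε.2.le |>.mpr ⟨hε.1, le_rfl⟩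
  have hshift := riseTime_comp_sub hσ hlim hneg hε.2.le (fun s hs => hp s (hsub hs))
    (fun s hs => hpc s (hsub hs))
  linarith [riseTime_pos hσ hlim hneg (hpc ε ⟨hε.1, hε.2.le⟩)]

end riseTime

/-- `p t ≥ min p₋ (g⁻¹ t)`, phrased without the inverse: every level `q < p₋` that `g` reaches by
time `t` lies below `p t`. -/
theorem stmt5_general (σ : ℝ → ℝ) (pm : ℝ)
    (hlip : ∀ x : ℝ, 0 < x → ∃ ε > 0, ∃ L : NNReal,
      LipschitzOnWith L σ (Metric.ball x ε ∩ Set.Ioi 0))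
    (hH2 : Filter.Tendsto σ (nhdsWithin 0 (Set.Ioi 0)) Filter.atBot)
    (hpm : 0 < pm ∧ σ pm = 0 ∧ ∀ q, 0 < q → σ q = 0 → pm ≤ q)
    (p : ℝ → ℝ)
    (hppos : ∀ t : ℝ, 0 < t → 0 < p t)
    (hode : ∀ t : ℝ, 0 < t → HasDerivAt p (-σ (p t)) t) :
    ∀ t : ℝ, 0 < t → ∀ q : ℝ, 0 < q → q < pm →
      (∫ z in (0:ℝ)..q, -(1 / σ z)) ≤ t → q ≤ p t := by
  intro t ht q hq hqpm hgq
  have hσ : ContinuousOn σ (Ioo 0 pm) :=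
    (locallyLipschitzOn_of_forall_ball hlip).continuousOn.mono Ioo_subset_Ioi_self
  have hneg := neg_on_Ioo_of_tendsto_atBot hσ hH2 fun x hx h0 => (hpm.2.2 x hx.1 h0).not_gt hx.2
  by_contra! hlt
  have hbelow : ∀ s ∈ Ioc 0 t, p s < q := fun s hs => by
    by_contra! hqs
    exact hlt.not_ge (level_le_of_hasDerivAt_of_neg hs.2
      (fun r hr => hode r (hs.1.trans_le hr.1)) (hneg q ⟨hq, hqpm⟩) hqs)
  have hrise := le_riseTime_apply hσ hH2 hneg ht (fun s hs => hode s hs.1)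
    fun s hs => ⟨hppos s hs.1, (hbelow s hs).trans hqpm⟩
  have hmono := strictMonoOn_riseTime hσ hH2 hneg ⟨hppos t ht, hlt.trans hqpm⟩ ⟨hq, hqpm⟩ hlt
  exact (hgq.trans hrise).not_gt hmono

/-- Lower bound for solutions of `p' = −σ(p)`: with `p₋` the smallest positive root of `σ` and
`g(q) = ∫₀^q (−1/σ(z)) dz` for `0 < q < p₋`, any solution with `p(0) = p₀ ≥ 0` satisfies
`p(t) ≥ min {p₋, g⁻¹(t)}` for all `t > 0`.  Since `g` is continuous and strictly increasing on
`(0, p₋)`, this is expressed equivalently as: for every `q ∈ (0, p₋)` with `g(q) ≤ t` one has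
`p(t) ≥ q`. -/
theorem stmt5 (σ : ℝ → ℝ) (pm : ℝ)
    (hlip : ∀ x : ℝ, 0 < x → ∃ ε > 0, ∃ L : NNReal,
      LipschitzOnWith L σ (Metric.ball x ε ∩ Set.Ioi 0))
    (hH2 : Filter.Tendsto σ (nhdsWithin 0 (Set.Ioi 0)) Filter.atBot)
    (hposlarge : ∃ M : ℝ, ∀ p, M ≤ p → 0 < σ p)
    (hpm : 0 < pm ∧ σ pm = 0 ∧ ∀ q, 0 < q → σ q = 0 → pm ≤ q)
    (p : ℝ → ℝ) (p₀ : ℝ) (hp₀ : 0 ≤ p₀) (hinit : p 0 = p₀)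
    (hpcont : ContinuousOn p (Set.Ici 0))
    (hppos : ∀ t : ℝ, 0 < t → 0 < p t)
    (hode : ∀ t : ℝ, 0 < t → HasDerivAt p (-σ (p t)) t) :
    ∀ t : ℝ, 0 < t → ∀ q : ℝ, 0 < q → q < pm →
      (∫ z in (0:ℝ)..q, -(1 / σ z)) ≤ t → q ≤ p t :=
  stmt5_general σ pm hlip hH2 hpm p hppos hode
end

section
/- Let σ : (0,∞) → ℝ be locally Lipschitz with σ(p) > 0 for all p > p₊ (where p₊ is the largest root of σ) and ∫_{p₊+1}^∞ dz/σ(z) < ∞. Define h(p) = ∫_p^∞ dz/σ(z) for p > p₊, which is continuous, strictly decreasing, and h(p) → 0 as p → ∞. Then any solution p(t) > 0 of the ODE p'(t) = −σ(p(t)) with p(0) = p₀ > 0 satisfies p(t) ≤ max{p₊ + 1, h⁻¹(t)} for all t > 0. -/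
/-!
Since `h' = -1/σ`, the quantity `h(p(s)) - s` is constant along a solution staying above
`p₊ + 1`. If `p(t) > q`, then, as `p` is decreasing wherever it lies above `q`, the solution
stays above `q` on `[0, t]`, and so `h(p(t)) = h(p(0)) + t ≥ t ≥ h(q) > h(p(t))`.
-/

open MeasureTheory Set Topology

theorem locallyLipschitzOn_of_lipschitzOnWith_ball_inter {α β : Type*} [PseudoMetricSpace α]
    [PseudoEMetricSpace β] {f : α → β} {s : Set α}
    (h : ∀ x ∈ s, ∃ ε > 0, ∃ L : NNReal, LipschitzOnWith L f (Metric.ball x ε ∩ s)) :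
    LocallyLipschitzOn s f := by
  intro x hx
  obtain ⟨ε, hε, L, hL⟩ := h x hx
  exact ⟨L, _, inter_comm s _ ▸ inter_mem_nhdsWithin s (Metric.ball_mem_nhds x hε), hL⟩

theorem hasDerivAt_integral_Ioi {f : ℝ → ℝ} {a x : ℝ} (hf : IntegrableOn f (Ioi a))
    (hax : a < x) (hfx : ContinuousAt f x) :
    HasDerivAt (fun y => ∫ z in Ioi y, f z) (-f x) x := by
  have hmeas : StronglyMeasurableAtFilter f (𝓝 x) :=
    ⟨Ioi a, Ioi_mem_nhds hax, hf.aestronglyMeasurable⟩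
  have hii : IntervalIntegrable f volume a x :=
    (intervalIntegrable_iff_integrableOn_Ioc_of_le hax.le).2 (hf.mono_set Ioc_subset_Ioi_self)
  have hd := (intervalIntegral.integral_hasDerivAt_right hii hmeas hfx).const_sub
    (∫ z in Ioi a, f z)
  refine hd.congr_of_eventuallyEq ?_
  filter_upwards [Ioi_mem_nhds hax] with y hy
  rw [← intervalIntegral.integral_Ioi_sub_Ioi hf (le_of_lt hy), sub_sub_cancel]

theorem integral_Ioi_lt_integral_Ioi {f : ℝ → ℝ} {b c : ℝ} (hf : IntegrableOn f (Ioi b))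
    (hpos : ∀ x ∈ Ioo b c, 0 < f x) (hbc : b < c) :
    ∫ z in Ioi c, f z < ∫ z in Ioi b, f z := by
  have hii : IntervalIntegrable f volume b c :=
    (intervalIntegrable_iff_integrableOn_Ioc_of_le hbc.le).2 (hf.mono_set Ioc_subset_Ioi_self)
  rw [← sub_pos, intervalIntegral.integral_Ioi_sub_Ioi hf hbc.le]
  exact intervalIntegral.intervalIntegral_pos_of_pos_on hii hpos hbc

theorem lt_of_deriv_neg_of_lt_right {p : ℝ → ℝ} {q a b : ℝ} (hp : ContinuousOn p (Icc a b))
    (hderiv : ∀ s ∈ Ioo a b, q < p s → deriv p s < 0) (hb : q < p b) :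
    ∀ s ∈ Icc a b, q < p s := by
  by_contra! ⟨s, hs, hps⟩
  obtain ⟨s₁, ⟨hs₁, hps₁⟩, hlast⟩ : ∃ s₁, IsGreatest (Icc a b ∩ p ⁻¹' Iic q) s₁ :=
    (isCompact_Icc.of_isClosed_subset
      (hp.preimage_isClosed_of_isClosed isClosed_Icc isClosed_Iic) inter_subset_left
      ).exists_isGreatest ⟨s, hs, hps⟩
  have hs₁b : s₁ < b := hs₁.2.lt_of_ne (by rintro rfl; exact (hps₁.trans_lt hb).false)
  have hanti : StrictAntiOn p (Icc s₁ b) := by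
    refine strictAntiOn_of_deriv_neg (convex_Icc _ _) (hp.mono (Icc_subset_Icc_left hs₁.1)) ?_
    rw [interior_Icc]
    intro u hu
    refine hderiv u ⟨hs₁.1.trans_lt hu.1, hu.2⟩ (lt_of_not_ge fun hpu => ?_)
    exact (hlast ⟨⟨hs₁.1.trans hu.1.le, hu.2.le⟩, hpu⟩).not_gt hu.1
  have := hanti (left_mem_Icc.2 hs₁b.le) (right_mem_Icc.2 hs₁b.le) hs₁b
  exact (hb.trans (this.trans_le hps₁)).false

theorem integral_Ioi_one_div_comp_solution_eq {σ p : ℝ → ℝ} {a t₀ t₁ : ℝ}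
    (hint : IntegrableOn (fun z => 1 / σ z) (Ioi a)) (hσ : ContinuousOn σ (Ioi a))
    (hσ0 : ∀ x ∈ Ioi a, σ x ≠ 0) (hode : ∀ s ∈ Icc t₀ t₁, HasDerivAt p (-σ (p s)) s)
    (habove : ∀ s ∈ Icc t₀ t₁, a < p s) :
    ∀ s ∈ Icc t₀ t₁, ∫ z in Ioi (p s), 1 / σ z = (∫ z in Ioi (p t₀), 1 / σ z) + (s - t₀) := by
  set F : ℝ → ℝ := fun s => (∫ z in Ioi (p s), 1 / σ z) - s
  have hF : ∀ s ∈ Icc t₀ t₁, HasDerivAt F 0 s := by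
    intro s hs
    have hps : p s ∈ Ioi a := habove s hs
    have hh := hasDerivAt_integral_Ioi hint hps
      (continuousAt_const.div (hσ.continuousAt (isOpen_Ioi.mem_nhds hps)) (hσ0 _ hps))
    have hF' := (hh.comp s (hode s hs)).sub (hasDerivAt_id s)
    rwa [neg_mul_neg, one_div_mul_cancel (hσ0 _ hps), sub_self] at hF'
  have hconst := constant_of_has_deriv_right_zero
    (fun s hs => (hF s hs).continuousAt.continuousWithinAt)
    (fun s hs => (hF s (Ico_subset_Icc_self hs)).hasDerivWithinAt)
  intro s hs
  linarith [hconst s hs]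

theorem stmt6_general (σ : ℝ → ℝ) (pp : ℝ)
    (hlip : ∀ x : ℝ, 0 < x → ∃ ε > 0, ∃ L : NNReal,
      LipschitzOnWith L σ (Metric.ball x ε ∩ Set.Ioi 0))
    (hroot : 0 < pp ∧ σ pp = 0 ∧ ∀ q, 0 < q → σ q = 0 → q ≤ pp)
    (hpos : ∀ q, pp < q → 0 < σ q)
    (hint : IntegrableOn (fun z => 1 / σ z) (Set.Ici (pp + 1)))
    (p : ℝ → ℝ)
    (hode : ∀ t : ℝ, 0 ≤ t → HasDerivAt p (-σ (p t)) t) :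
    ∀ t : ℝ, 0 < t → ∀ q : ℝ, pp + 1 < q →
      (∫ z in Set.Ioi q, 1 / σ z) ≤ t → p t ≤ q := by
  intro t ht q hq hhq
  by_contra! hqt
  have hσ : ContinuousOn σ (Ioi (pp + 1)) :=
    (locallyLipschitzOn_of_lipschitzOnWith_ball_inter hlip).continuousOn.mono
      (Ioi_subset_Ioi (by linarith [hroot.1]))
  have hint' : IntegrableOn (fun z => 1 / σ z) (Ioi (pp + 1)) := hint.mono_set Ioi_subset_Ici_self
  have habove : ∀ s ∈ Icc 0 t, q < p s := by
    refine lt_of_deriv_neg_of_lt_right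
      (fun s hs => (hode s hs.1).continuousAt.continuousWithinAt) (fun s hs hps => ?_) hqt
    rw [(hode s hs.1.le).deriv, neg_lt_zero]
    exact hpos _ (by linarith)
  have hflow := integral_Ioi_one_div_comp_solution_eq hint' hσ
    (fun x hx => (hpos x (by linarith [mem_Ioi.1 hx])).ne') (fun s hs => hode s hs.1)
    (fun s hs => hq.trans (habove s hs)) t ⟨ht.le, le_rfl⟩
  have hdecr := integral_Ioi_lt_integral_Ioi (hint'.mono_set (Ioi_subset_Ioi hq.le))
    (fun x hx => one_div_pos.2 (hpos x (by linarith [hx.1]))) hqt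
  have hp₀ : q < p 0 := habove 0 ⟨le_rfl, ht.le⟩
  have hnonneg : 0 ≤ ∫ z in Ioi (p 0), 1 / σ z := setIntegral_nonneg measurableSet_Ioi
    fun z hz => (one_div_pos.2 (hpos z (by linarith [mem_Ioi.1 hz]))).le
  linarith

/-- Upper bound for solutions of `p' = −σ(p)`: with `p₊` the largest root of `σ`, `σ > 0` on
`(p₊,∞)`, `∫_{p₊+1}^∞ dz/σ(z) < ∞` and `h(q) = ∫_q^∞ dz/σ(z)`, any positive solution with
`p(0) = p₀ > 0` satisfies `p(t) ≤ max {p₊ + 1, h⁻¹(t)}` for all `t > 0`.  Since `h` is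
continuous and strictly decreasing on `(p₊,∞)`, this is expressed equivalently as: for every
`q > p₊ + 1` with `h(q) ≤ t` one has `p(t) ≤ q`. -/
theorem stmt6 (σ : ℝ → ℝ) (pp : ℝ)
    (hlip : ∀ x : ℝ, 0 < x → ∃ ε > 0, ∃ L : NNReal,
      LipschitzOnWith L σ (Metric.ball x ε ∩ Set.Ioi 0))
    (hroot : 0 < pp ∧ σ pp = 0 ∧ ∀ q, 0 < q → σ q = 0 → q ≤ pp)
    (hpos : ∀ q, pp < q → 0 < σ q)
    (hint : IntegrableOn (fun z => 1 / σ z) (Set.Ici (pp + 1)))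
    (p : ℝ → ℝ) (p₀ : ℝ) (hp₀ : 0 < p₀) (hinit : p 0 = p₀)
    (hppos : ∀ t : ℝ, 0 ≤ t → 0 < p t)
    (hode : ∀ t : ℝ, 0 ≤ t → HasDerivAt p (-σ (p t)) t) :
    ∀ t : ℝ, 0 < t → ∀ q : ℝ, pp + 1 < q →
      (∫ z in Set.Ioi q, 1 / σ z) ≤ t → p t ≤ q :=
  stmt6_general σ pp hlip hroot hpos hint p hode
end

section
/- Let σ : (0,∞) → ℝ be locally Lipschitz, with σ(p) → −∞ as p → 0+, and suppose W(p) = ∫₁^p σ(z)dz is convex on (0,θ) for some 0 < θ. Then for μ > θ, every local solution of the system ṗᵢ = −σ(pᵢ) + Σⱼ λⱼ σ(pⱼ) with pᵢ(0) > 0 and Σⱼ λⱼ pⱼ(0) = μ (λⱼ > 0, Σλⱼ = 1) extends to a global solution on [0,∞) with pᵢ(t) > 0 for all t ≥ 0. -/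
open Finset Set Filter Metric Topology NNReal

/-!
Truncating `σ` outside a compact interval `[a, R] ⊂ (0, ∞)` gives a bounded, globally Lipschitz
vector field, hence a global solution. The weighted mean `∑ λⱼ pⱼ = μ` is conserved, so while all
components are `≥ a` each one is `≤ μ / λⱼ ≤ R := ∑ₖ μ / λₖ` and the truncation is invisible.
The level `a` is a minimum point of `σ` on `[c, R]`, where `σ c` lies below `σ` on `[d, R]`
(possible since `σ → -∞` at `0+`) and `d ≤ μ`, `d ≤ pᵢ(0)`. When a component reaches `a`, its
`σ`-value is the smallest one, while a component `≥ μ` has a strictly larger one; hence its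
derivative `∑ λⱼ (σ(pⱼ) - σ(a))` is positive and no component crosses `a`.
-/

section ODE

variable {E : Type*} [NormedAddCommGroup E] [NormedSpace ℝ E] [CompleteSpace E]
  {F : E → E} {K : ℝ≥0} {C : ℝ}

theorem exists_hasDerivAt_of_abs_lt_of_lipschitzWith (hF : LipschitzWith K F)
    (hC : ∀ x, ‖F x‖ ≤ C) (x₀ : E) {T : ℝ} (hT : 0 < T) :
    ∃ f : ℝ → E, f 0 = x₀ ∧ ∀ t, |t| < T → HasDerivAt f (F (f t)) t := by
  have hPL : IsPicardLindelof (fun _ ↦ F) (tmin := -T) (tmax := T)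
      ⟨0, by constructor <;> linarith⟩ x₀ (C.toNNReal * T.toNNReal) 0 C.toNNReal K :=
    .of_time_independent (fun x _ ↦ (hC x).trans (Real.le_coe_toNNReal C)) hF.lipschitzOnWith
      (by simp [hT.le])
  obtain ⟨f, hf0, hf⟩ := hPL.exists_eq_forall_mem_Icc_hasDerivWithinAt₀
  refine ⟨f, hf0, fun t ht ↦ ?_⟩
  obtain ⟨hTt, htT⟩ := abs_lt.1 ht
  exact (hf t ⟨hTt.le, htT.le⟩).hasDerivAt (Icc_mem_nhds hTt htT)

theorem exists_forall_hasDerivAt_of_lipschitzWith (hF : LipschitzWith K F) (hC : ∀ x, ‖F x‖ ≤ C)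
    (x₀ : E) : ∃ f : ℝ → E, f 0 = x₀ ∧ ∀ t, HasDerivAt f (F (f t)) t := by
  choose f hf0 hf using fun n : ℕ ↦
    exists_hasDerivAt_of_abs_lt_of_lipschitzWith hF hC x₀ (Nat.cast_add_one_pos (α := ℝ) n)
  have hagree : ∀ m n : ℕ, ∀ s : ℝ, |s| < m + 1 → |s| < n + 1 → f m s = f n s := by
    intro m n s hm hn
    set r := min ((m : ℝ) + 1) (n + 1)
    have hr : 0 < r := lt_min (Nat.cast_add_one_pos m) (Nat.cast_add_one_pos n)
    refine ODE_solution_unique_of_mem_Ioo (v := fun _ ↦ F) (s := fun _ ↦ univ)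
      (fun _ _ ↦ hF.lipschitzOnWith) (t₀ := 0) ⟨neg_lt_zero.2 hr, hr⟩
      (fun t ht ↦ ⟨hf m t ((abs_lt.2 ht).trans_le (min_le_left _ _)), trivial⟩)
      (fun t ht ↦ ⟨hf n t ((abs_lt.2 ht).trans_le (min_le_right _ _)), trivial⟩)
      (by rw [hf0, hf0]) (abs_lt.1 (lt_min hm hn))
  refine ⟨fun t ↦ f ⌊|t|⌋₊ t, by simpa using hf0 0, fun t ↦ ?_⟩
  have hnhds : ∀ᶠ s in 𝓝 t, |s| < (⌊|t|⌋₊ : ℝ) + 1 :=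
    (isOpen_lt continuous_abs continuous_const).mem_nhds (Nat.lt_floor_add_one |t|)
  exact (hf _ t (Nat.lt_floor_add_one _)).congr_of_eventuallyEq
    (hnhds.mono fun s hs ↦ hagree _ _ s (Nat.lt_floor_add_one _) hs)

end ODE

section WeightedSum

variable {ι : Type*} [Fintype ι] {lam : ι → ℝ}

theorem abs_weightedSum_le (hlam : ∀ j, 0 ≤ lam j) (hsum : ∑ j, lam j = 1) {y : ι → ℝ} {c : ℝ}
    (hy : ∀ j, |y j| ≤ c) : |∑ j, lam j * y j| ≤ c :=
  calc |∑ j, lam j * y j| ≤ ∑ j, lam j * |y j| := by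
        simpa only [abs_mul, abs_of_nonneg (hlam _)] using
          abs_sum_le_sum_abs (fun j ↦ lam j * y j) univ
    _ ≤ ∑ j, lam j * c := sum_le_sum fun j _ ↦ mul_le_mul_of_nonneg_left (hy j) (hlam j)
    _ = c := by rw [← sum_mul, hsum, one_mul]

theorem exists_weightedSum_le (hlam : ∀ j, 0 < lam j) (hsum : ∑ j, lam j = 1) (x : ι → ℝ) :
    ∃ j, ∑ k, lam k * x k ≤ x j := by
  have hne : (univ : Finset ι).Nonempty := nonempty_of_sum_ne_zero (hsum ▸ one_ne_zero)
  obtain ⟨j, -, hj⟩ := exists_le_of_sum_le (f := fun j ↦ lam j * ∑ k, lam k * x k)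
    (g := fun j ↦ lam j * x j) hne (by rw [← sum_mul, hsum, one_mul])
  exact ⟨j, le_of_mul_le_mul_left hj (hlam j)⟩

theorem apply_le_sum_weightedSum_div (hlam : ∀ j, 0 < lam j) {x : ι → ℝ} (hx : ∀ j, 0 ≤ x j)
    (j : ι) : x j ≤ ∑ k, (∑ l, lam l * x l) / lam k := by
  have hS : 0 ≤ ∑ l, lam l * x l := sum_nonneg fun l _ ↦ mul_nonneg (hlam l).le (hx l)
  calc x j ≤ (∑ l, lam l * x l) / lam j := by
        rw [le_div_iff₀ (hlam j), mul_comm]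
        exact single_le_sum (f := fun l ↦ lam l * x l)
          (fun l _ ↦ mul_nonneg (hlam l).le (hx l)) (mem_univ j)
    _ ≤ ∑ k, (∑ l, lam l * x l) / lam k :=
        single_le_sum (f := fun k ↦ (∑ l, lam l * x l) / lam k)
          (fun k _ ↦ div_nonneg hS (hlam k).le) (mem_univ j)

theorem weightedSum_eq_of_hasDerivAt {x v : ℝ → ι → ℝ} (hx : ∀ t, HasDerivAt x (v t) t)
    (hv : ∀ t, ∑ j, lam j * v t j = 0) (t : ℝ) :
    ∑ j, lam j * x t j = ∑ j, lam j * x 0 j := by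
  have h : ∀ s, HasDerivAt (fun s ↦ ∑ j, lam j * x s j) 0 s := fun s ↦ by
    simpa only [hv s] using
      HasDerivAt.fun_sum (u := univ) fun j _ ↦ (hasDerivAt_pi.1 (hx s) j).const_mul (lam j)
  exact is_const_of_deriv_eq_zero (fun s ↦ (h s).differentiableAt) (fun s ↦ (h s).deriv) t 0

end WeightedSum

section MeanField

variable {ι : Type*} [Fintype ι] {lam : ι → ℝ} {g : ℝ → ℝ}

def meanField (lam : ι → ℝ) (g : ℝ → ℝ) (x : ι → ℝ) : ι → ℝ :=
  fun i ↦ -g (x i) + ∑ j, lam j * g (x j)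

theorem meanField_apply_eq_sum (hsum : ∑ j, lam j = 1) (x : ι → ℝ) (i : ι) :
    meanField lam g x i = ∑ j, lam j * (g (x j) - g (x i)) := by
  simp only [meanField, mul_sub, sum_sub_distrib, ← sum_mul, hsum, one_mul]
  ring

theorem weightedSum_meanField (hsum : ∑ j, lam j = 1) (x : ι → ℝ) :
    ∑ j, lam j * meanField lam g x j = 0 := by
  simp only [meanField, mul_add, sum_add_distrib, ← sum_mul, hsum, one_mul, mul_neg,
    sum_neg_distrib, neg_add_cancel]

theorem meanField_pos (hlam : ∀ j, 0 < lam j) (hsum : ∑ j, lam j = 1) {x : ι → ℝ} {i j : ι}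
    (hmin : ∀ k, g (x i) ≤ g (x k)) (hj : g (x i) < g (x j)) : 0 < meanField lam g x i := by
  rw [meanField_apply_eq_sum hsum]
  exact sum_pos' (fun k _ ↦ mul_nonneg (hlam k).le (sub_nonneg.2 (hmin k)))
    ⟨j, mem_univ j, mul_pos (hlam j) (sub_pos.2 hj)⟩

theorem lipschitzWith_meanField (hlam : ∀ j, 0 ≤ lam j) (hsum : ∑ j, lam j = 1) {K : ℝ≥0}
    (hg : LipschitzWith K g) : LipschitzWith (2 * K) (meanField lam g) := by
  refine LipschitzWith.of_dist_le_mul fun x y ↦ (dist_pi_le_iff (by positivity)).2 fun i ↦ ?_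
  have hcomp : ∀ j, |g (x j) - g (y j)| ≤ K * dist x y := fun j ↦ by
    rw [← Real.dist_eq]
    exact (hg.dist_le_mul _ _).trans (by gcongr; exact dist_le_pi_dist x y j)
  calc dist (meanField lam g x i) (meanField lam g y i)
      = |∑ j, lam j * (g (x j) - g (y j)) - (g (x i) - g (y i))| := by
        simp only [Real.dist_eq, meanField, mul_sub, sum_sub_distrib]
        ring_nf
    _ ≤ |∑ j, lam j * (g (x j) - g (y j))| + |g (x i) - g (y i)| := abs_sub _ _
    _ ≤ K * dist x y + K * dist x y := add_le_add (abs_weightedSum_le hlam hsum hcomp) (hcomp i)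
    _ = ↑(2 * K) * dist x y := by push_cast; ring

theorem norm_meanField_le (hlam : ∀ j, 0 ≤ lam j) (hsum : ∑ j, lam j = 1) {C : ℝ}
    (hg : ∀ y, ‖g y‖ ≤ C) (x : ι → ℝ) : ‖meanField lam g x‖ ≤ 2 * C := by
  have hC : 0 ≤ C := (norm_nonneg _).trans (hg 0)
  refine (pi_norm_le_iff_of_nonneg (by positivity)).2 fun i ↦ ?_
  calc ‖meanField lam g x i‖ ≤ |g (x i)| + |∑ j, lam j * g (x j)| := by
        rw [Real.norm_eq_abs, ← abs_neg (g (x i))]; exact abs_add_le _ _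
    _ ≤ C + C := add_le_add (hg _) (abs_weightedSum_le hlam hsum fun j ↦ hg _)
    _ = 2 * C := by ring

theorem le_apply_of_hasDerivAt_meanField (hlam : ∀ j, 0 < lam j) (hsum : ∑ j, lam j = 1)
    {x : ℝ → ι → ℝ} (hx : ∀ t, HasDerivAt x (meanField lam g (x t)) t) {a d : ℝ}
    (hmin : ∀ y, g a ≤ g y) (hlt : ∀ y, d ≤ y → g a < g y) (hd : d ≤ ∑ j, lam j * x 0 j)
    (ha : ∀ i, a ≤ x 0 i) {t : ℝ} (ht : 0 ≤ t) (i : ι) : a ≤ x t i := by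
  refine image_le_of_deriv_right_lt_deriv_boundary (f := fun _ ↦ a) (f' := fun _ ↦ 0)
    continuousOn_const (fun s _ ↦ hasDerivWithinAt_const s _ a) (ha i)
    (fun s ↦ hasDerivAt_pi.1 (hx s) i) (fun s _ hs ↦ ?_) ⟨ht, le_rfl⟩
  obtain ⟨j, hj⟩ := exists_weightedSum_le hlam hsum (x s)
  rw [weightedSum_eq_of_hasDerivAt hx (fun _ ↦ weightedSum_meanField hsum _)] at hj
  exact meanField_pos hlam hsum (fun k ↦ hs ▸ hmin _) (hs ▸ hlt _ (hd.trans hj))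

end MeanField

theorem LipschitzOnWith.lipschitzWith_comp_max_min {f : ℝ → ℝ} {K : ℝ≥0} {a b : ℝ} (h : a ≤ b)
    (hf : LipschitzOnWith K f (Icc a b)) : LipschitzWith K fun y ↦ f (max a (min b y)) := by
  rw [← mul_one K]
  exact hf.to_restrict.comp (LipschitzWith.projIcc h)

theorem exists_barrier_level {σ : ℝ → ℝ} (hσ : ContinuousOn σ (Ioi 0))
    (hσ0 : Tendsto σ (𝓝[>] 0) atBot) {d R : ℝ} (hd : 0 < d) (hdR : d ≤ R) :
    ∃ a, 0 < a ∧ a < d ∧ IsMinOn σ (Icc a R) a ∧ ∀ y ∈ Icc d R, σ a < σ y := by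
  obtain ⟨m, hm⟩ := isCompact_Icc.bddBelow_image
    (hσ.mono fun y hy ↦ (hd.trans_le hy.1 : 0 < y))
  obtain ⟨c, ⟨hcm, hcd⟩, hc0 : 0 < c⟩ := ((hσ0.eventually (eventually_lt_atBot m)).and
    (eventually_nhdsWithin_of_eventually_nhds (eventually_lt_nhds hd))).and
    self_mem_nhdsWithin |>.exists
  obtain ⟨a, ha, hamin⟩ := isCompact_Icc.exists_isMinOn (nonempty_Icc.2 (hcd.le.trans hdR))
    (hσ.mono fun y hy ↦ hc0.trans_le hy.1)
  have hlt : ∀ y ∈ Icc d R, σ a < σ y := fun y hy ↦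
    ((hamin ⟨le_rfl, hcd.le.trans hdR⟩).trans_lt hcm).trans_le (hm (mem_image_of_mem σ hy))
  refine ⟨a, hc0.trans_le ha.1, ?_, fun y hy ↦ hamin ⟨ha.1.trans hy.1, hy.2⟩, hlt⟩
  by_contra! hda
  exact (hlt a ⟨hda, ha.2⟩).false

theorem exists_truncation_of_tendsto_atBot {σ : ℝ → ℝ} (hσ : LocallyLipschitzOn (Ioi 0) σ)
    (hσ0 : Tendsto σ (𝓝[>] 0) atBot) {d R : ℝ} (hd : 0 < d) (hdR : d ≤ R) :
    ∃ a ∈ Ioo 0 d, ∃ g : ℝ → ℝ, (∃ K, LipschitzWith K g) ∧ (∃ C, ∀ y, ‖g y‖ ≤ C) ∧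
      EqOn g σ (Icc a R) ∧ (∀ y, g a ≤ g y) ∧ ∀ y, d ≤ y → g a < g y := by
  obtain ⟨a, ha, had, hamin, halt⟩ := exists_barrier_level hσ.continuousOn hσ0 hd hdR
  have haR : a ≤ R := had.le.trans hdR
  have hIcc : Icc a R ⊆ Ioi 0 := fun y hy ↦ ha.trans_le hy.1
  obtain ⟨K, hK⟩ := (hσ.mono hIcc).exists_lipschitzOnWith_of_compact isCompact_Icc
  obtain ⟨C, hC⟩ := isCompact_Icc.exists_bound_of_continuousOn (hσ.continuousOn.mono hIcc)
  have hclamp : ∀ y, max a (min R y) ∈ Icc a R :=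
    fun y ↦ ⟨le_max_left _ _, max_le haR (min_le_left _ _)⟩
  have hga : max a (min R a) = a := by rw [min_eq_right haR, max_self]
  refine ⟨a, ⟨ha, had⟩, fun y ↦ σ (max a (min R y)), ⟨K, hK.lipschitzWith_comp_max_min haR⟩,
    ⟨C, fun y ↦ hC _ (hclamp y)⟩, fun y hy ↦ by simp only [min_eq_right hy.2, max_eq_right hy.1],
    fun y ↦ ?_, fun y hy ↦ ?_⟩
  · simpa only [hga] using isMinOn_iff.1 hamin _ (hclamp y)
  · simpa only [hga] using halt _ ⟨le_max_of_le_right (le_min hdR hy), (hclamp y).2⟩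

theorem stmt8_general (σ : ℝ → ℝ)
    (hlip : ∀ x : ℝ, 0 < x → ∃ ε > 0, ∃ L : NNReal,
      LipschitzOnWith L σ (Metric.ball x ε ∩ Set.Ioi 0))
    (hH2 : Filter.Tendsto σ (nhdsWithin 0 (Set.Ioi 0)) Filter.atBot)
    (N : ℕ) (lam : Fin N → ℝ) (hlam : ∀ j, 0 < lam j) (hsum : ∑ j, lam j = 1)
    (μ : ℝ)
    (p₀ : Fin N → ℝ) (hp₀ : ∀ i, 0 < p₀ i) (hmean : ∑ j, lam j * p₀ j = μ) :
    ∃ p : Fin N → ℝ → ℝ, (∀ i, p i 0 = p₀ i) ∧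
      (∀ i, ∀ t : ℝ, 0 ≤ t → 0 < p i t) ∧
      (∀ i, ∀ t : ℝ, 0 ≤ t →
        HasDerivAt (p i) (-σ (p i t) + ∑ j, lam j * σ (p j t)) t) := by
  have hσ : LocallyLipschitzOn (Ioi 0) σ := fun x hx ↦
    let ⟨ε, hε, L, hL⟩ := hlip x hx
    ⟨L, _, mem_nhdsWithin.2 ⟨ball x ε, isOpen_ball, mem_ball_self hε, subset_rfl⟩, hL⟩
  obtain ⟨j, -⟩ := nonempty_of_sum_ne_zero (hsum ▸ one_ne_zero : ∑ j, lam j ≠ 0)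
  have hμ : 0 < μ := hmean ▸ sum_pos (fun k _ ↦ mul_pos (hlam k) (hp₀ k)) ⟨j, mem_univ j⟩
  obtain ⟨d, ⟨hdμ, hdp⟩, hd⟩ := ((eventually_le_nhds hμ).and
    (eventually_all.2 fun i ↦ eventually_le_nhds (hp₀ i))
    |> eventually_nhdsWithin_of_eventually_nhds |>.and self_mem_nhdsWithin).exists (f := 𝓝[>] 0)
  have hdR : d ≤ ∑ k, μ / lam k :=
    (hdp j).trans (hmean ▸ apply_le_sum_weightedSum_div hlam (fun i ↦ (hp₀ i).le) j)
  obtain ⟨a, ⟨ha, had⟩, g, ⟨K, hgK⟩, ⟨C, hgC⟩, hgσ, hmin, hlt⟩ :=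
    exists_truncation_of_tendsto_atBot hσ hH2 hd hdR
  obtain ⟨x, hx0, hx⟩ := exists_forall_hasDerivAt_of_lipschitzWith
    (lipschitzWith_meanField (fun j ↦ (hlam j).le) hsum hgK)
    (norm_meanField_le (fun j ↦ (hlam j).le) hsum hgC) p₀
  have hxa : ∀ t, 0 ≤ t → ∀ i, a ≤ x t i := fun t ht ↦
    le_apply_of_hasDerivAt_meanField hlam hsum hx hmin hlt (hx0 ▸ hmean ▸ hdμ)
      (fun i ↦ hx0 ▸ had.le.trans (hdp i)) ht
  have hxR : ∀ t, 0 ≤ t → ∀ i, x t i ≤ ∑ k, μ / lam k := fun t ht i ↦ by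
    rw [← hmean, ← hx0, ← weightedSum_eq_of_hasDerivAt hx (fun _ ↦ weightedSum_meanField hsum _) t]
    exact apply_le_sum_weightedSum_div hlam (fun j ↦ ha.le.trans (hxa t ht j)) i
  refine ⟨fun i t ↦ x t i, fun i ↦ congrFun hx0 i, fun i t ht ↦ ha.trans_le (hxa t ht i),
    fun i t ht ↦ ?_⟩
  simpa only [meanField, hgσ ⟨hxa t ht _, hxR t ht _⟩] using hasDerivAt_pi.1 (hx t) i

/-- Global existence for the finite-dimensional system: if `σ` is locally Lipschitz on `(0,∞)`,
`σ(p) → −∞` as `p → 0+`, `σ` is nondecreasing on `(0,θ)` (i.e. `W` convex there), and the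
initial data is positive with weighted mean `μ > θ`, then there is a global solution on
`[0,∞)` with all components positive for all time. -/
theorem stmt8 (σ : ℝ → ℝ) (θ : ℝ) (hθ : 0 < θ)
    (hlip : ∀ x : ℝ, 0 < x → ∃ ε > 0, ∃ L : NNReal,
      LipschitzOnWith L σ (Metric.ball x ε ∩ Set.Ioi 0))
    (hH2 : Filter.Tendsto σ (nhdsWithin 0 (Set.Ioi 0)) Filter.atBot)
    (hmono : MonotoneOn σ (Set.Ioo 0 θ))
    (N : ℕ) (lam : Fin N → ℝ) (hlam : ∀ j, 0 < lam j) (hsum : ∑ j, lam j = 1)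
    (μ : ℝ) (hμ : θ < μ)
    (p₀ : Fin N → ℝ) (hp₀ : ∀ i, 0 < p₀ i) (hmean : ∑ j, lam j * p₀ j = μ) :
    ∃ p : Fin N → ℝ → ℝ, (∀ i, p i 0 = p₀ i) ∧
      (∀ i, ∀ t : ℝ, 0 ≤ t → 0 < p i t) ∧
      (∀ i, ∀ t : ℝ, 0 ≤ t →
        HasDerivAt (p i) (-σ (p i t) + ∑ j, lam j * σ (p j t)) t) :=
  stmt8_general σ hlip hH2 N lam hlam hsum μ p₀ hp₀ hmean
end

section
/- Let σ : (0,∞) → ℝ be such that W(p) = ∫₁^p σ dz is λ-convex (i.e. (σ(a) − σ(b))(a − b) ≥ −λ(a − b)² for all a,b > 0). Let p, q : [0,T] → L²(0,1) be two solutions of p_t(x,t) = −σ(p(x,t)) + ∫₀¹ σ(p(y,t)) dy with p(x,t), q(x,t) > 0 and ∫₀¹ p dx = ∫₀¹ q dx = μ for all t. Then ∫₀¹ |p(x,t) − q(x,t)|² dx ≤ e^{2λt} ∫₀¹ |p(x,0) − q(x,0)|² dx for all t ∈ [0,T]. -/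
/-!
For every `x`, the weighted square `e^{-2λt} (p - q)²` has time derivative at most
`2 e^{-2λt} (Δp - Δq) (p - q)`, where `Δp t = ∫ σ(p(t, y)) dy` is the nonlocal term, which does
not depend on `x`. Integrating in time and then in `x`, the right-hand side disappears by Fubini,
because `p(s, ·) - q(s, ·)` has mean zero.

The delicate point is that `Δp` is integrable in time although `σ` is neither continuous nor
locally bounded near `0`. Since `φ = σ + λ id` is monotone, the comparison principle preserves
the order of `p(·, y)` and `p(·, x₀)`, so `φ(p(·, y)) - φ(p(·, x₀))` has constant sign and its time
integral is controlled by values of `p` alone; Tonelli then bounds `∫∫ |φ(p) - φ(p(·, x₀))|`.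
-/

open MeasureTheory Set Real

section Fubini

variable {α β : Type*} [MeasurableSpace α] [MeasurableSpace β] {μ : Measure α} {ν : Measure β}
  [SFinite μ]

lemma integrable_prod_mul_of_integral_abs_le {c : β → ℝ} {r : β → α → ℝ} (hc : Integrable c ν)
    (hr : AEStronglyMeasurable (Function.uncurry r) (ν.prod μ)) {K : ℝ}
    (hrint : ∀ᵐ s ∂ν, Integrable (r s) μ) (hbound : ∀ᵐ s ∂ν, ∫ x, |r s x| ∂μ ≤ K) :
    Integrable (fun z : β × α => c z.1 * r z.1 z.2) (ν.prod μ) := by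
  have hmeas : AEStronglyMeasurable (fun z : β × α => c z.1 * r z.1 z.2) (ν.prod μ) :=
    hc.aestronglyMeasurable.comp_fst.mul hr
  refine (integrable_prod_iff hmeas).2 ⟨hrint.mono fun s hs => hs.const_mul (c s), ?_⟩
  refine (hc.norm.mul_const K).mono' hmeas.norm.integral_prod_right' ?_
  filter_upwards [hbound] with s hs
  calc ‖∫ x, ‖c s * r s x‖ ∂μ‖ = |c s| * ∫ x, |r s x| ∂μ := by
        rw [Real.norm_of_nonneg (integral_nonneg fun _ => norm_nonneg _)]
        simp only [norm_mul, Real.norm_eq_abs, integral_const_mul]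
    _ ≤ ‖c s‖ * K := mul_le_mul_of_nonneg_left hs (abs_nonneg _)

lemma integral_integral_mul_eq_zero [SFinite ν] {c : β → ℝ} {r : β → α → ℝ} (hc : Integrable c ν)
    (hr : AEStronglyMeasurable (Function.uncurry r) (ν.prod μ)) {K : ℝ}
    (hrint : ∀ᵐ s ∂ν, Integrable (r s) μ) (hbound : ∀ᵐ s ∂ν, ∫ x, |r s x| ∂μ ≤ K)
    (hzero : ∀ᵐ s ∂ν, ∫ x, r s x ∂μ = 0) :
    ∫ x, ∫ s, c s * r s x ∂ν ∂μ = 0 := by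
  rw [← integral_integral_swap (integrable_prod_mul_of_integral_abs_le hc hr hrint hbound)]
  refine integral_eq_zero_of_ae (hzero.mono fun s hs => ?_)
  show ∫ x, c s * r s x ∂μ = 0
  rw [integral_const_mul, hs, mul_zero]

end Fubini

lemma integral_abs_sub_le_of_integral_eq {f g : ℝ → ℝ} {S : Set ℝ} {m : ℝ} (hS : MeasurableSet S)
    (hf : IntegrableOn f S) (hg : IntegrableOn g S) (hpos : ∀ x ∈ S, 0 < f x ∧ 0 < g x)
    (hfm : ∫ x in S, f x = m) (hgm : ∫ x in S, g x = m) :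
    ∫ x in S, |f x - g x| ≤ m + m :=
  calc ∫ x in S, |f x - g x| ≤ ∫ x in S, (f x + g x) :=
        setIntegral_mono_on (hf.sub hg).abs (hf.add hg) hS fun x hx =>
          abs_sub_le_iff.2 ⟨by linarith [hpos x hx], by linarith [hpos x hx]⟩
    _ = m + m := by rw [integral_add hf hg, hfm, hgm]

section

variable {σ : ℝ → ℝ} {lam : ℝ}

lemma monotoneOn_add_mul_of_oneSided
    (hσ : ∀ a b : ℝ, 0 < a → 0 < b → (σ a - σ b) * (a - b) ≥ -lam * (a - b) ^ 2) :
    MonotoneOn (fun z => σ z + lam * z) (Ioi 0) := by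
  intro a ha b hb hab
  rcases hab.eq_or_lt with rfl | hlt
  · rfl
  · nlinarith [hσ b a hb ha]

lemma abs_le_of_mem_Icc_of_monotoneOn (hφ : MonotoneOn (fun z => σ z + lam * z) (Ioi 0)) {m M z : ℝ}
    (hm : 0 < m) (hz : z ∈ Icc m M) :
    |σ z| ≤ |σ m + lam * m| + |σ M + lam * M| + |lam| * M := by
  have hz₀ : 0 < z := hm.trans_le hz.1
  have hlow := hφ hm hz₀ hz.1
  have hupp := hφ hz₀ (hz₀.trans_le hz.2) hz.2
  have hlin : |lam * z| ≤ |lam| * M := by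
    rw [abs_mul, abs_of_pos hz₀]
    exact mul_le_mul_of_nonneg_left hz.2 (abs_nonneg lam)
  simp only at hlow hupp
  rw [abs_le] at hlin ⊢
  constructor <;>
    linarith [neg_abs_le (σ m + lam * m), le_abs_self (σ M + lam * M),
      abs_nonneg (σ m + lam * m), abs_nonneg (σ M + lam * M)]

/-- `σ` need not be measurable, but on `(0, ∞)` it is `(φ ∘ exp) ∘ log - lam • id` with
`φ ∘ exp` monotone. -/
lemma aemeasurable_comp_of_monotoneOn (hφ : MonotoneOn (fun z => σ z + lam * z) (Ioi 0))
    {α : Type*} [MeasurableSpace α] {μ : Measure α} {f : α → ℝ} (hf : AEMeasurable f μ)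
    (hpos : ∀ᵐ a ∂μ, 0 < f a) : AEMeasurable (fun a => σ (f a)) μ := by
  have hmono : Monotone fun w => σ (exp w) + lam * exp w := fun v w hvw =>
    hφ (exp_pos v) (exp_pos w) (exp_le_exp.2 hvw)
  refine ((hmono.measurable.comp_aemeasurable (measurable_log.comp_aemeasurable hf)).sub
    (hf.const_mul lam)).congr (hpos.mono fun a ha => ?_)
  simp [exp_log ha]

lemma integrableOn_comp_of_continuousOn (hφ : MonotoneOn (fun z => σ z + lam * z) (Ioi 0))
    {f : ℝ → ℝ} {a b : ℝ} (hf : ContinuousOn f (Icc a b)) (hpos : ∀ s ∈ Icc a b, 0 < f s) :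
    IntegrableOn (fun s => σ (f s)) (Icc a b) := by
  rcases (Icc a b).eq_empty_or_nonempty with h | hne
  · simp [h]
  obtain ⟨s₀, hs₀, hmin⟩ := isCompact_Icc.exists_isMinOn hne hf
  obtain ⟨s₁, -, hmax⟩ := isCompact_Icc.exists_isMaxOn hne hf
  refine Integrable.of_bound ((aemeasurable_comp_of_monotoneOn hφ
    (hf.aemeasurable measurableSet_Icc) ?_).aestronglyMeasurable)
    (|σ (f s₀) + lam * f s₀| + |σ (f s₁) + lam * f s₁| + |lam| * f s₁) ?_
  · exact (ae_restrict_mem measurableSet_Icc).mono hpos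
  · exact (ae_restrict_mem measurableSet_Icc).mono fun s hs =>
      abs_le_of_mem_Icc_of_monotoneOn hφ (hpos s₀ hs₀) ⟨hmin hs, hmax hs⟩

/-- Comparison principle: `f - g` stays below every strict supersolution
`ε e^{(lam + 1)(s - t)}` of `d' = lam d`. -/
lemma le_of_hasDerivAt_of_oneSided
    (hσ : ∀ a b : ℝ, 0 < a → 0 < b → (σ a - σ b) * (a - b) ≥ -lam * (a - b) ^ 2)
    {f g Δ : ℝ → ℝ} {a b : ℝ}
    (hf : ∀ s ∈ Icc a b, HasDerivAt f (-σ (f s) + Δ s) s)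
    (hg : ∀ s ∈ Icc a b, HasDerivAt g (-σ (g s) + Δ s) s)
    (hfpos : ∀ s ∈ Icc a b, 0 < f s) (hgpos : ∀ s ∈ Icc a b, 0 < g s) (ha : f a ≤ g a) :
    ∀ t ∈ Icc a b, f t ≤ g t := by
  intro t ht
  rw [← sub_nonpos]
  refine le_of_forall_pos_le_add fun ε hε => ?_
  have hB : ∀ s, HasDerivAt (fun s => ε * exp ((lam + 1) * (s - t)))
      (ε * exp ((lam + 1) * (s - t)) * (lam + 1)) s := fun s => by
    simpa [mul_assoc] using
      (((hasDerivAt_id s).sub_const t).const_mul (lam + 1)).exp.const_mul ε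
  have hIco : Ico a b ⊆ Icc a b := Ico_subset_Icc_self
  have key := image_le_of_deriv_right_lt_deriv_boundary' (a := a) (b := b)
    (f := fun s => f s - g s) (B := fun s => ε * exp ((lam + 1) * (s - t)))
    (fun s hs => ((hf s hs).sub (hg s hs)).continuousAt.continuousWithinAt)
    (fun s hs => ((hf s (hIco hs)).sub (hg s (hIco hs))).hasDerivWithinAt)
    (by nlinarith [exp_pos ((lam + 1) * (a - t))])
    (fun s _ => (hB s).continuousAt.continuousWithinAt)
    (fun s _ => (hB s).hasDerivWithinAt) ?_ ht
  · simpa using key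
  · intro s hs heq
    have hB₀ : 0 < ε * exp ((lam + 1) * (s - t)) := by positivity
    have hσs := hσ (f s) (g s) (hfpos s (hIco hs)) (hgpos s (hIco hs))
    rw [heq] at hσs
    have hdiff : -lam * (ε * exp ((lam + 1) * (s - t))) ≤ σ (f s) - σ (g s) :=
      le_of_mul_le_mul_right (by nlinarith) hB₀
    linarith

lemma integral_abs_sub_le_of_le
    (hσ : ∀ a b : ℝ, 0 < a → 0 < b → (σ a - σ b) * (a - b) ≥ -lam * (a - b) ^ 2)
    {u₁ u₂ Δ : ℝ → ℝ} {a b : ℝ} (hab : a ≤ b)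
    (hu₁ : ∀ s ∈ Icc a b, HasDerivAt u₁ (-σ (u₁ s) + Δ s) s)
    (hu₂ : ∀ s ∈ Icc a b, HasDerivAt u₂ (-σ (u₂ s) + Δ s) s)
    (hpos₁ : ∀ s ∈ Icc a b, 0 < u₁ s) (hpos₂ : ∀ s ∈ Icc a b, 0 < u₂ s) (ha : u₁ a ≤ u₂ a) :
    ∫ s in a..b, |(σ (u₁ s) + lam * u₁ s) - (σ (u₂ s) + lam * u₂ s)| ≤
      u₁ b + u₂ a + |lam| * ∫ s in a..b, (u₁ s + u₂ s) := by
  have hφ := monotoneOn_add_mul_of_oneSided hσ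
  have hle := le_of_hasDerivAt_of_oneSided hσ hu₁ hu₂ hpos₁ hpos₂ ha
  have hc₁ : ContinuousOn u₁ (Icc a b) := fun s hs => (hu₁ s hs).continuousAt.continuousWithinAt
  have hc₂ : ContinuousOn u₂ (Icc a b) := fun s hs => (hu₂ s hs).continuousAt.continuousWithinAt
  have hσ₁₂ : IntervalIntegrable (fun s => σ (u₂ s) - σ (u₁ s)) volume a b :=
    (intervalIntegrable_iff_integrableOn_Icc_of_le hab).2
      ((integrableOn_comp_of_continuousOn hφ hc₂ hpos₂).sub
        (integrableOn_comp_of_continuousOn hφ hc₁ hpos₁))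
  have hftc : ∫ s in a..b, (σ (u₂ s) - σ (u₁ s)) = (u₁ b - u₂ b) - (u₁ a - u₂ a) := by
    refine intervalIntegral.integral_eq_sub_of_hasDerivAt (f := fun s => u₁ s - u₂ s)
      (fun s hs => ?_) hσ₁₂
    rw [uIcc_of_le hab] at hs
    exact ((hu₁ s hs).sub (hu₂ s hs)).congr_deriv (by ring)
  have hi₁ : IntervalIntegrable u₁ volume a b := hc₁.intervalIntegrable_of_Icc hab
  have hi₂ : IntervalIntegrable u₂ volume a b := hc₂.intervalIntegrable_of_Icc hab
  calc ∫ s in a..b, |(σ (u₁ s) + lam * u₁ s) - (σ (u₂ s) + lam * u₂ s)|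
      = ∫ s in a..b, ((σ (u₂ s) - σ (u₁ s)) + lam * (u₂ s - u₁ s)) := by
        refine intervalIntegral.integral_congr fun s hs => ?_
        rw [uIcc_of_le hab] at hs
        rw [abs_of_nonpos (sub_nonpos.2 (hφ (hpos₁ s hs) (hpos₂ s hs) (hle s hs)))]
        ring
    _ ≤ ∫ s in a..b, ((σ (u₂ s) - σ (u₁ s)) + |lam| * (u₁ s + u₂ s)) := by
        refine intervalIntegral.integral_mono_on hab (hσ₁₂.add ((hi₂.sub hi₁).const_mul lam))
          (hσ₁₂.add ((hi₁.add hi₂).const_mul |lam|)) fun s hs => add_le_add_right ?_ _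
        exact (mul_le_mul_of_nonneg_right (le_abs_self lam) (sub_nonneg.2 (hle s hs))).trans
          (mul_le_mul_of_nonneg_left (by linarith [hpos₁ s hs]) (abs_nonneg lam))
    _ = (u₁ b - u₂ b) - (u₁ a - u₂ a) + |lam| * ∫ s in a..b, (u₁ s + u₂ s) := by
        rw [intervalIntegral.integral_add hσ₁₂ ((hi₁.add hi₂).const_mul |lam|),
          intervalIntegral.integral_const_mul, hftc]
    _ ≤ u₁ b + u₂ a + |lam| * ∫ s in a..b, (u₁ s + u₂ s) := by
        linarith [hpos₂ b (right_mem_Icc.2 hab), hpos₁ a (left_mem_Icc.2 hab)]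

lemma integral_abs_sub_le
    (hσ : ∀ a b : ℝ, 0 < a → 0 < b → (σ a - σ b) * (a - b) ≥ -lam * (a - b) ^ 2)
    {u₁ u₂ Δ : ℝ → ℝ} {a b : ℝ} (hab : a ≤ b)
    (hu₁ : ∀ s ∈ Icc a b, HasDerivAt u₁ (-σ (u₁ s) + Δ s) s)
    (hu₂ : ∀ s ∈ Icc a b, HasDerivAt u₂ (-σ (u₂ s) + Δ s) s)
    (hpos₁ : ∀ s ∈ Icc a b, 0 < u₁ s) (hpos₂ : ∀ s ∈ Icc a b, 0 < u₂ s) :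
    ∫ s in a..b, |(σ (u₁ s) + lam * u₁ s) - (σ (u₂ s) + lam * u₂ s)| ≤
      u₁ a + u₁ b + u₂ a + u₂ b + |lam| * ∫ s in a..b, (u₁ s + u₂ s) := by
  have ha : a ∈ Icc a b := left_mem_Icc.2 hab
  have hb : b ∈ Icc a b := right_mem_Icc.2 hab
  rcases le_total (u₁ a) (u₂ a) with h | h
  · linarith [integral_abs_sub_le_of_le hσ hab hu₁ hu₂ hpos₁ hpos₂ h, hpos₁ a ha, hpos₂ b hb]
  · have h' := integral_abs_sub_le_of_le hσ hab hu₂ hu₁ hpos₂ hpos₁ h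
    simp only [abs_sub_comm (σ (u₂ _) + _), add_comm (u₂ _) (u₁ _)] at h'
    linarith [hpos₂ a ha, hpos₁ b hb]

lemma exp_mul_sq_sub_le
    (hσ : ∀ a b : ℝ, 0 < a → 0 < b → (σ a - σ b) * (a - b) ≥ -lam * (a - b) ^ 2)
    {u v Δu Δv : ℝ → ℝ} {a b : ℝ} (hab : a ≤ b)
    (hu : ∀ s ∈ Icc a b, HasDerivAt u (-σ (u s) + Δu s) s)
    (hv : ∀ s ∈ Icc a b, HasDerivAt v (-σ (v s) + Δv s) s)
    (hupos : ∀ s ∈ Icc a b, 0 < u s) (hvpos : ∀ s ∈ Icc a b, 0 < v s)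
    (hΔ : IntegrableOn (fun s => Δu s - Δv s) (Icc a b)) :
    exp (-(2 * lam * b)) * (u b - v b) ^ 2 - exp (-(2 * lam * a)) * (u a - v a) ^ 2 ≤
      ∫ s in a..b, 2 * exp (-(2 * lam * s)) * (Δu s - Δv s) * (u s - v s) := by
  have hw : ∀ s, HasDerivAt (fun s => exp (-(2 * lam * s))) (-(2 * lam) * exp (-(2 * lam * s))) s :=
    fun s => by simpa [mul_comm] using ((hasDerivAt_id s).const_mul (2 * lam)).neg.exp
  have hderiv : ∀ s ∈ Icc a b, HasDerivAt (fun s => exp (-(2 * lam * s)) * (u s - v s) ^ 2)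
      (exp (-(2 * lam * s)) * (-2 * ((σ (u s) - σ (v s)) * (u s - v s) + lam * (u s - v s) ^ 2))
        + 2 * exp (-(2 * lam * s)) * (Δu s - Δv s) * (u s - v s)) s := fun s hs => by
    refine ((hw s).mul (((hu s hs).fun_sub (hv s hs)).fun_pow 2)).congr_deriv ?_
    ring
  have hr : ContinuousOn (fun s => u s - v s) (Icc a b) := fun s hs =>
    ((hu s hs).sub (hv s hs)).continuousAt.continuousWithinAt
  refine intervalIntegral.sub_le_integral_of_hasDeriv_right_of_le hab
    (fun s hs => (hderiv s hs).continuousAt.continuousWithinAt)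
    (fun s hs => (hderiv s (Ioo_subset_Icc_self hs)).hasDerivWithinAt)
    ((hΔ.continuousOn_mul (by fun_prop) isCompact_Icc).mul_continuousOn hr isCompact_Icc)
    fun s hs => ?_
  have hs' := Ioo_subset_Icc_self hs
  have hdiss := hσ (u s) (v s) (hupos s hs') (hvpos s hs')
  have : exp (-(2 * lam * s)) * (-2 * ((σ (u s) - σ (v s)) * (u s - v s) + lam * (u s - v s) ^ 2))
      ≤ 0 := mul_nonpos_of_nonneg_of_nonpos (exp_pos _).le (by linarith)
  linarith

lemma integrable_prod_of_integral_eq {p : ℝ → ℝ → ℝ} {μ T : ℝ}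
    (hp : Measurable (Function.uncurry p)) (hpos : ∀ t ∈ Icc 0 T, ∀ x ∈ Ioo 0 1, 0 < p t x)
    (hpint : ∀ t ∈ Icc 0 T, IntegrableOn (p t) (Ioo 0 1))
    (hmean : ∀ t ∈ Icc 0 T, ∫ x in Ioo 0 1, p t x = μ) :
    Integrable (fun z : ℝ × ℝ => p z.2 z.1)
      ((volume.restrict (Ioo 0 1)).prod (volume.restrict (Ioc 0 T))) := by
  have hsub : Ioc 0 T ⊆ Icc 0 T := Ioc_subset_Icc_self
  refine (integrable_prod_iff' (hp.comp measurable_swap).aestronglyMeasurable).2 ⟨?_, ?_⟩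
  · filter_upwards [ae_restrict_mem measurableSet_Ioc] with s hs using hpint s (hsub hs)
  · refine (integrable_const μ).congr ?_
    filter_upwards [ae_restrict_mem measurableSet_Ioc] with s hs
    rw [← hmean s (hsub hs)]
    refine setIntegral_congr_fun measurableSet_Ioo fun y hy => ?_
    exact (Real.norm_of_nonneg (hpos s (hsub hs) y hy).le).symm

lemma aestronglyMeasurable_prod_comp (hφ : MonotoneOn (fun z => σ z + lam * z) (Ioi 0))
    {p : ℝ → ℝ → ℝ} {T : ℝ} (hp : Measurable (Function.uncurry p))
    (hpos : ∀ t ∈ Icc 0 T, ∀ x ∈ Ioo 0 1, 0 < p t x) :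
    AEStronglyMeasurable (fun z : ℝ × ℝ => σ (p z.2 z.1) + lam * p z.2 z.1)
      ((volume.restrict (Ioo 0 1)).prod (volume.restrict (Ioc 0 T))) := by
  have hp' : Measurable fun z : ℝ × ℝ => p z.2 z.1 := hp.comp measurable_swap
  refine ((aemeasurable_comp_of_monotoneOn hφ hp'.aemeasurable ?_).add
    (hp'.aemeasurable.const_mul lam)).aestronglyMeasurable
  rw [Measure.prod_restrict]
  filter_upwards [ae_restrict_mem (measurableSet_Ioo.prod measurableSet_Ioc)] with z hz
  exact hpos _ (Ioc_subset_Icc_self hz.2) _ hz.1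

/-- The coordinates are `z = (y, s)` with `y ∈ (0, 1)` and `s ∈ (0, T]`. -/
lemma integrable_prod_sub_comp
    (hσ : ∀ a b : ℝ, 0 < a → 0 < b → (σ a - σ b) * (a - b) ≥ -lam * (a - b) ^ 2)
    {p : ℝ → ℝ → ℝ} {T x₀ : ℝ} (hT : 0 ≤ T) (hx₀ : x₀ ∈ Ioo 0 1)
    (hp : Measurable (Function.uncurry p)) (hpos : ∀ t ∈ Icc 0 T, ∀ x ∈ Ioo 0 1, 0 < p t x)
    (hpint : ∀ t ∈ Icc 0 T, IntegrableOn (p t) (Ioo 0 1))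
    (hpprod : Integrable (fun z : ℝ × ℝ => p z.2 z.1)
      ((volume.restrict (Ioo 0 1)).prod (volume.restrict (Ioc 0 T))))
    {Δ : ℝ → ℝ} (hode : ∀ x ∈ Ioo 0 1, ∀ t ∈ Icc 0 T,
      HasDerivAt (fun s => p s x) (-σ (p t x) + Δ t) t) :
    Integrable (fun z : ℝ × ℝ =>
        (σ (p z.2 z.1) + lam * p z.2 z.1) - (σ (p z.2 x₀) + lam * p z.2 x₀))
      ((volume.restrict (Ioo 0 1)).prod (volume.restrict (Ioc 0 T))) := by
  have hφ := monotoneOn_add_mul_of_oneSided hσ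
  have hsub : Ioc 0 T ⊆ Icc 0 T := Ioc_subset_Icc_self
  have hcont : ∀ x ∈ Ioo (0 : ℝ) 1, ContinuousOn (fun s => p s x) (Icc 0 T) := fun x hx s hs =>
    (hode x hx s hs).continuousAt.continuousWithinAt
  have hφint : ∀ x ∈ Ioo (0 : ℝ) 1,
      IntegrableOn (fun s => σ (p s x) + lam * p s x) (Icc 0 T) := fun x hx =>
    (integrableOn_comp_of_continuousOn hφ (hcont x hx) fun s hs => hpos s hs x hx).add
      ((hcont x hx).integrableOn_Icc.const_mul lam)
  have hmeas := (aestronglyMeasurable_prod_comp hφ hp hpos).sub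
    (((hφint x₀ hx₀).mono_set hsub).comp_snd (volume.restrict (Ioo 0 1))).aestronglyMeasurable
  have hp₀prod : Integrable (fun z : ℝ × ℝ => p z.2 x₀)
      ((volume.restrict (Ioo 0 1)).prod (volume.restrict (Ioc 0 T))) :=
    (((hcont x₀ hx₀).integrableOn_Icc).mono_set hsub).comp_snd _
  refine (integrable_prod_iff hmeas).2 ⟨?_, ?_⟩
  · filter_upwards [ae_restrict_mem measurableSet_Ioo] with y hy
    exact ((hφint y hy).sub (hφint x₀ hx₀)).mono_set hsub
  refine Integrable.mono' (g := fun y => p 0 y + p T y + p 0 x₀ + p T x₀ +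
    |lam| * ∫ s in Ioc 0 T, (p s y + p s x₀)) ?_ hmeas.norm.integral_prod_right' ?_
  · exact ((((hpint 0 (left_mem_Icc.2 hT)).add (hpint T (right_mem_Icc.2 hT))).add
      (integrable_const _)).add (integrable_const _)).add
      ((hpprod.add hp₀prod).integral_prod_left.const_mul |lam|)
  · filter_upwards [ae_restrict_mem measurableSet_Ioo] with y hy
    rw [Real.norm_of_nonneg (integral_nonneg fun _ => norm_nonneg _)]
    have h := integral_abs_sub_le hσ hT (hode y hy) (hode x₀ hx₀) (fun s hs => hpos s hs y hy)
      (fun s hs => hpos s hs x₀ hx₀)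
    simpa only [intervalIntegral.integral_of_le hT, Real.norm_eq_abs, Pi.add_apply, Pi.sub_apply]
      using h

lemma integrableOn_integral_comp
    (hσ : ∀ a b : ℝ, 0 < a → 0 < b → (σ a - σ b) * (a - b) ≥ -lam * (a - b) ^ 2)
    {p : ℝ → ℝ → ℝ} {μ T : ℝ} (hT : 0 ≤ T) (hp : Measurable (Function.uncurry p))
    (hpos : ∀ t ∈ Icc 0 T, ∀ x ∈ Ioo 0 1, 0 < p t x)
    (hpint : ∀ t ∈ Icc 0 T, IntegrableOn (p t) (Ioo 0 1))
    (hmean : ∀ t ∈ Icc 0 T, ∫ x in Ioo 0 1, p t x = μ)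
    (hode : ∀ x ∈ Ioo 0 1, ∀ t ∈ Icc 0 T,
      HasDerivAt (fun s => p s x) (-σ (p t x) + ∫ y in Ioo 0 1, σ (p t y)) t) :
    IntegrableOn (fun t => ∫ y in Ioo 0 1, σ (p t y)) (Icc 0 T) := by
  rw [integrableOn_Icc_iff_integrableOn_Ioc]
  have hsub : Ioc 0 T ⊆ Icc 0 T := Ioc_subset_Icc_self
  set x₀ : ℝ := 1 / 2
  have hx₀ : x₀ ∈ Ioo (0 : ℝ) 1 := by norm_num [x₀]
  have hcont : ContinuousOn (fun s => p s x₀) (Icc 0 T) := fun s hs =>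
    (hode _ hx₀ s hs).continuousAt.continuousWithinAt
  have hD := integrable_prod_sub_comp hσ hT hx₀ hp hpos hpint
    (integrable_prod_of_integral_eq hp hpos hpint hmean) hode
  have hφ₀ : IntegrableOn (fun s => σ (p s x₀) + lam * p s x₀) (Ioc 0 T) :=
    ((integrableOn_comp_of_continuousOn (monotoneOn_add_mul_of_oneSided hσ) hcont
      fun s hs => hpos s hs _ hx₀).add (hcont.integrableOn_Icc.const_mul lam)).mono_set hsub
  refine ((hD.integral_prod_right.add hφ₀).sub (integrable_const (lam * μ))).congr ?_
  filter_upwards [ae_restrict_mem measurableSet_Ioc, hD.prod_left_ae] with s hs hDs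
  calc (∫ y in Ioo 0 1, (σ (p s y) + lam * p s y) - (σ (p s x₀) + lam * p s x₀)) +
        (σ (p s x₀) + lam * p s x₀) - lam * μ
      = ∫ y in Ioo 0 1, ((σ (p s y) + lam * p s y) - (σ (p s x₀) + lam * p s x₀)
          + (σ (p s x₀) + lam * p s x₀) - lam * p s y) := by
        rw [integral_sub (hDs.fun_add (integrable_const _)) ((hpint s (hsub hs)).const_mul lam),
          integral_add hDs (integrable_const _), integral_const_mul, hmean s (hsub hs)]
        simp
    _ = ∫ y in Ioo 0 1, σ (p s y) := by
        congr 1 with y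
        ring

lemma integral_sq_sub_le_of_integrableOn {μ T : ℝ}
    (hσ : ∀ a b : ℝ, 0 < a → 0 < b → (σ a - σ b) * (a - b) ≥ -lam * (a - b) ^ 2)
    {p q : ℝ → ℝ → ℝ} {Δp Δq : ℝ → ℝ}
    (hpm : Measurable (Function.uncurry p)) (hqm : Measurable (Function.uncurry q))
    (hpos : ∀ t ∈ Icc 0 T, ∀ x ∈ Ioo 0 1, 0 < p t x ∧ 0 < q t x)
    (hint : ∀ t ∈ Icc 0 T, IntegrableOn (p t) (Ioo 0 1) ∧ IntegrableOn (q t) (Ioo 0 1))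
    (hmean : ∀ t ∈ Icc 0 T, ∫ x in Ioo 0 1, p t x = μ ∧ ∫ x in Ioo 0 1, q t x = μ)
    (hsq : IntegrableOn (fun x => (p 0 x - q 0 x) ^ 2) (Ioo 0 1))
    (hodep : ∀ x ∈ Ioo 0 1, ∀ t ∈ Icc 0 T, HasDerivAt (fun s => p s x) (-σ (p t x) + Δp t) t)
    (hodeq : ∀ x ∈ Ioo 0 1, ∀ t ∈ Icc 0 T, HasDerivAt (fun s => q s x) (-σ (q t x) + Δq t) t)
    (hΔ : IntegrableOn (fun t => Δp t - Δq t) (Icc 0 T)) :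
    ∀ t ∈ Icc 0 T, ∫ x in Ioo 0 1, (p t x - q t x) ^ 2 ≤
      exp (2 * lam * t) * ∫ x in Ioo 0 1, (p 0 x - q 0 x) ^ 2 := by
  intro t ht
  have hsub : Icc 0 t ⊆ Icc 0 T := Icc_subset_Icc_right ht.2
  have hsub' : Ioc 0 t ⊆ Icc 0 T := Ioc_subset_Icc_self.trans hsub
  set c : ℝ → ℝ := fun s => 2 * exp (-(2 * lam * s)) * (Δp s - Δq s)
  have hc : IntegrableOn c (Icc 0 t) :=
    (hΔ.mono_set hsub).continuousOn_mul (by fun_prop) isCompact_Icc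
  have hpointwise : ∀ x ∈ Ioo (0 : ℝ) 1, exp (-(2 * lam * t)) * (p t x - q t x) ^ 2 ≤
      (p 0 x - q 0 x) ^ 2 + ∫ s in Ioc 0 t, c s * (p s x - q s x) := by
    intro x hx
    have h := exp_mul_sq_sub_le hσ ht.1 (fun s hs => hodep x hx s (hsub hs))
      (fun s hs => hodeq x hx s (hsub hs)) (fun s hs => (hpos s (hsub hs) x hx).1)
      (fun s hs => (hpos s (hsub hs) x hx).2) (hΔ.mono_set hsub)
    rw [intervalIntegral.integral_of_le ht.1, mul_zero, neg_zero, exp_zero, one_mul] at h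
    linarith
  have hslices : ∀ᵐ s ∂volume.restrict (Ioc 0 t),
      Integrable (fun x => p s x - q s x) (volume.restrict (Ioo 0 1)) ∧
      ∫ x in Ioo 0 1, |p s x - q s x| ≤ μ + μ ∧ ∫ x in Ioo 0 1, (p s x - q s x) = 0 := by
    filter_upwards [ae_restrict_mem measurableSet_Ioc] with s hs
    obtain ⟨hps, hqs⟩ := hint s (hsub' hs)
    obtain ⟨hmp, hmq⟩ := hmean s (hsub' hs)
    exact ⟨hps.sub hqs, integral_abs_sub_le_of_integral_eq measurableSet_Ioo hps hqs
      (hpos s (hsub' hs)) hmp hmq, by rw [integral_sub hps hqs, hmp, hmq, sub_self]⟩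
  have hprod := integrable_prod_mul_of_integral_abs_le (hc.mono_set Ioc_subset_Icc_self)
    (hpm.sub hqm).aestronglyMeasurable (hslices.mono fun _ h => h.1)
    (hslices.mono fun _ h => h.2.1)
  have hzero := integral_integral_mul_eq_zero (hc.mono_set Ioc_subset_Icc_self)
    (hpm.sub hqm).aestronglyMeasurable (hslices.mono fun _ h => h.1)
    (hslices.mono fun _ h => h.2.1) (hslices.mono fun _ h => h.2.2)
  calc ∫ x in Ioo 0 1, (p t x - q t x) ^ 2
      = exp (2 * lam * t) * ∫ x in Ioo 0 1, exp (-(2 * lam * t)) * (p t x - q t x) ^ 2 := by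
        rw [integral_const_mul, ← mul_assoc, ← exp_add, add_neg_cancel, exp_zero, one_mul]
    _ ≤ exp (2 * lam * t) *
          ∫ x in Ioo 0 1, ((p 0 x - q 0 x) ^ 2 + ∫ s in Ioc 0 t, c s * (p s x - q s x)) := by
        refine mul_le_mul_of_nonneg_left ?_ (exp_pos _).le
        exact integral_mono_of_nonneg (ae_of_all _ fun x => by positivity)
          (hsq.add hprod.integral_prod_right) ((ae_restrict_mem measurableSet_Ioo).mono hpointwise)
    _ = exp (2 * lam * t) * ∫ x in Ioo 0 1, (p 0 x - q 0 x) ^ 2 := by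
        rw [integral_add hsq hprod.integral_prod_right, hzero, add_zero]

end

theorem stmt10_general (σ : ℝ → ℝ) (lam μ T : ℝ) (hμ : 0 < μ)
    (hσ : ∀ a b : ℝ, 0 < a → 0 < b → (σ a - σ b) * (a - b) ≥ -lam * (a - b) ^ 2)
    (p q : ℝ → ℝ → ℝ)
    (hmeas : Measurable (Function.uncurry p) ∧ Measurable (Function.uncurry q))
    (hpos : ∀ t ∈ Set.Icc (0:ℝ) T, ∀ x ∈ Set.Ioo (0:ℝ) 1, 0 < p t x ∧ 0 < q t x)
    (hmean : ∀ t ∈ Set.Icc (0:ℝ) T,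
      (∫ x in Set.Ioo (0:ℝ) 1, p t x) = μ ∧ (∫ x in Set.Ioo (0:ℝ) 1, q t x) = μ)
    (hintsq : ∀ t ∈ Set.Icc (0:ℝ) T,
      IntegrableOn (fun x => (p t x - q t x) ^ 2) (Set.Ioo 0 1))
    (hodep : ∀ x ∈ Set.Ioo (0:ℝ) 1, ∀ t ∈ Set.Icc (0:ℝ) T,
      HasDerivAt (fun s => p s x) (-σ (p t x) + ∫ y in Set.Ioo (0:ℝ) 1, σ (p t y)) t)
    (hodeq : ∀ x ∈ Set.Ioo (0:ℝ) 1, ∀ t ∈ Set.Icc (0:ℝ) T,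
      HasDerivAt (fun s => q s x) (-σ (q t x) + ∫ y in Set.Ioo (0:ℝ) 1, σ (q t y)) t) :
    ∀ t ∈ Set.Icc (0:ℝ) T,
      (∫ x in Set.Ioo (0:ℝ) 1, (p t x - q t x) ^ 2) ≤
        Real.exp (2 * lam * t) * ∫ x in Set.Ioo (0:ℝ) 1, (p 0 x - q 0 x) ^ 2 := by
  obtain ⟨hpm, hqm⟩ := hmeas
  intro t ht
  have hT : 0 ≤ T := ht.1.trans ht.2
  have hint : ∀ s ∈ Icc 0 T, IntegrableOn (p s) (Ioo 0 1) ∧ IntegrableOn (q s) (Ioo 0 1) :=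
    fun s hs => ⟨.of_integral_ne_zero ((hmean s hs).1 ▸ hμ.ne'),
      .of_integral_ne_zero ((hmean s hs).2 ▸ hμ.ne')⟩
  have hΔp := integrableOn_integral_comp hσ hT hpm (fun s hs x hx => (hpos s hs x hx).1)
    (fun s hs => (hint s hs).1) (fun s hs => (hmean s hs).1) hodep
  have hΔq := integrableOn_integral_comp hσ hT hqm (fun s hs x hx => (hpos s hs x hx).2)
    (fun s hs => (hint s hs).2) (fun s hs => (hmean s hs).2) hodeq
  exact integral_sq_sub_le_of_integrableOn hσ hpm hqm hpos hint hmean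
    (hintsq 0 (left_mem_Icc.2 hT)) hodep hodeq (hΔp.sub hΔq) t ht

/-- Gronwall / continuous-dependence estimate: if `σ` satisfies the one-sided Lipschitz
condition `(σ a − σ b)(a − b) ≥ −λ(a − b)²` on `(0,∞)` and `p, q` are two positive strong
solutions of `p_t = −σ(p) + ∫₀¹ σ(p) dy` on `(0,1) × [0,T]` with the same mean `μ`, then
`∫₀¹ |p(·,t) − q(·,t)|² dx ≤ e^{2λt} ∫₀¹ |p(·,0) − q(·,0)|² dx` for all `t ∈ [0,T]`. -/
theorem stmt10 (σ : ℝ → ℝ) (lam μ T : ℝ) (hT : 0 < T) (hμ : 0 < μ)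
    (hσ : ∀ a b : ℝ, 0 < a → 0 < b → (σ a - σ b) * (a - b) ≥ -lam * (a - b) ^ 2)
    (p q : ℝ → ℝ → ℝ)
    (hmeas : Measurable (Function.uncurry p) ∧ Measurable (Function.uncurry q))
    (hpos : ∀ t ∈ Set.Icc (0:ℝ) T, ∀ x ∈ Set.Ioo (0:ℝ) 1, 0 < p t x ∧ 0 < q t x)
    (hmean : ∀ t ∈ Set.Icc (0:ℝ) T,
      (∫ x in Set.Ioo (0:ℝ) 1, p t x) = μ ∧ (∫ x in Set.Ioo (0:ℝ) 1, q t x) = μ)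
    (hintσ : ∀ t ∈ Set.Icc (0:ℝ) T,
      IntegrableOn (fun x => σ (p t x)) (Set.Ioo 0 1) ∧
      IntegrableOn (fun x => σ (q t x)) (Set.Ioo 0 1))
    (hintsq : ∀ t ∈ Set.Icc (0:ℝ) T,
      IntegrableOn (fun x => (p t x - q t x) ^ 2) (Set.Ioo 0 1))
    (hodep : ∀ x ∈ Set.Ioo (0:ℝ) 1, ∀ t ∈ Set.Icc (0:ℝ) T,
      HasDerivAt (fun s => p s x) (-σ (p t x) + ∫ y in Set.Ioo (0:ℝ) 1, σ (p t y)) t)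
    (hodeq : ∀ x ∈ Set.Ioo (0:ℝ) 1, ∀ t ∈ Set.Icc (0:ℝ) T,
      HasDerivAt (fun s => q s x) (-σ (q t x) + ∫ y in Set.Ioo (0:ℝ) 1, σ (q t y)) t) :
    ∀ t ∈ Set.Icc (0:ℝ) T,
      (∫ x in Set.Ioo (0:ℝ) 1, (p t x - q t x) ^ 2) ≤
        Real.exp (2 * lam * t) * ∫ x in Set.Ioo (0:ℝ) 1, (p 0 x - q 0 x) ^ 2 :=
  stmt10_general σ lam μ T hμ hσ p q hmeas hpos hmean hintsq hodep hodeq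
end

section
/- Let σ : (0,∞) → ℝ be continuous and strictly increasing with σ(v) → −∞ as v → 0+ and σ(v) + 2λv → ∞ as v → ∞ (λ > 0), and suppose σ(v) + 2λv ≥ a + λv for v ≥ 1 for some constant a. Let h(v) = σ(v) + 2λv and let g ∈ L²(0,1). Then the function η(c) = ∫₀¹ h⁻¹(c + g(x)) dx is well-defined, continuous and strictly increasing on ℝ, with η(c) → 0 as c → −∞ and η(c) → ∞ as c → ∞; in particular for each μ > 0 there is a unique c with η(c) = μ. -/
/-! The inverse `hinv` of `h = σ + 2λ·id` is a strictly increasing bijection `ℝ → (0,∞)`, hence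
continuous, and the bound `h v ≥ a + λv` gives it at most linear growth, so `hinv (c + g)` is
dominated by an integrable affine function of `|g|`, locally uniformly in `c`. Dominated
convergence then gives continuity of `η` and `η → 0` at `−∞`; applied to `min hinv M` it gives
`η → ∞` at `+∞`. Strict monotonicity passes from `hinv` to `η`, and the intermediate value
theorem produces the unique `c` with `η c = μ`. -/

open MeasureTheory Filter Set Topology

theorem Monotone.continuous_of_isOpen_range {α β : Type*} [LinearOrder α] [TopologicalSpace α]
    [OrderTopology α] [LinearOrder β] [TopologicalSpace β] [OrderTopology β] [DenselyOrdered β]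
    {f : α → β} (hf : Monotone f) (hrange : IsOpen (range f)) : Continuous f :=
  continuous_iff_continuousAt.2 fun c => continuousAt_of_monotoneOn_of_image_mem_nhds
    (hf.monotoneOn univ) univ_mem (by rw [image_univ]; exact hrange.mem_nhds (mem_range_self c))

theorem StrictMonoOn.strictMono_of_rightInverse {α β : Type*} [LinearOrder α] [Preorder β]
    {h : α → β} {f : β → α} {s : Set α} (hh : StrictMonoOn h s)
    (hfs : ∀ y, f y ∈ s) (hhf : ∀ y, h (f y) = y) : StrictMono f := fun y y' hyy' =>
  (hh.lt_iff_lt (hfs y) (hfs y')).1 (by rwa [hhf, hhf])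

theorem le_add_mul_abs_of_linear_lower_bound {h : ℝ → ℝ} {a lam v : ℝ} (hlam : 0 < lam)
    (hgrow : ∀ v, 1 ≤ v → a + lam * v ≤ h v) : v ≤ (1 + |a| / lam) + lam⁻¹ * |h v| := by
  have hrest : 0 ≤ |a| / lam + lam⁻¹ * |h v| := by positivity
  rcases le_or_gt v 1 with hv | hv
  · linarith
  · have : lam * v ≤ lam * (|a| / lam + lam⁻¹ * |h v|) := by
      rw [mul_add, mul_div_cancel₀ _ hlam.ne', mul_inv_cancel_left₀ hlam.ne']
      linarith [hgrow v hv.le, neg_abs_le a, le_abs_self (h v)]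
    linarith [le_of_mul_le_mul_left this hlam]

section IntegralCompConstAdd

variable {α : Type*} [MeasurableSpace α] {μ : Measure α} {f : ℝ → ℝ} {g : α → ℝ}

theorem integrable_comp_const_add_of_linear_growth [IsFiniteMeasure μ] {C D : ℝ} (hD : 0 ≤ D)
    (hf : Continuous f) (hgrowth : ∀ s, |f s| ≤ C + D * |s|) (hg : Integrable g μ) (c : ℝ) :
    Integrable (fun x => f (c + g x)) μ := by
  refine Integrable.mono' (g := fun x => C + D * (|c| + |g x|))
    ((integrable_const C).add (((integrable_const |c|).add hg.abs).const_mul D))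
    (hf.comp_aestronglyMeasurable (aestronglyMeasurable_const.add hg.aestronglyMeasurable))
    (.of_forall fun x => ?_)
  calc ‖f (c + g x)‖ ≤ C + D * |c + g x| := hgrowth _
    _ ≤ C + D * (|c| + |g x|) := by gcongr; exact abs_add_le _ _

theorem continuous_integral_comp_const_add
    (hint : ∀ c, Integrable (fun x => f (c + g x)) μ) (hf : Continuous f) (hmono : Monotone f)
    (hf0 : ∀ s, 0 ≤ f s) : Continuous fun c => ∫ x, f (c + g x) ∂μ := by
  refine continuous_iff_continuousAt.2 fun c₀ => continuousAt_of_dominated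
    (.of_forall fun c => (hint c).aestronglyMeasurable) ?_ (hint (c₀ + 1))
    (.of_forall fun x => by fun_prop)
  filter_upwards [eventually_le_nhds (lt_add_one c₀)] with c hc
  exact .of_forall fun x => by rw [Real.norm_of_nonneg (hf0 _)]; exact hmono (by linarith)

theorem strictMono_integral_comp_const_add [NeZero μ]
    (hint : ∀ c, Integrable (fun x => f (c + g x)) μ) (hf : StrictMono f) :
    StrictMono fun c => ∫ x, f (c + g x) ∂μ := by
  intro c c' hcc'
  have hlt : ∀ x, 0 < f (c' + g x) - f (c + g x) := fun x => sub_pos.2 (hf (by linarith))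
  have hpos : 0 < ∫ x, (f (c' + g x) - f (c + g x)) ∂μ := by
    rw [integral_pos_iff_support_of_nonneg (fun x => (hlt x).le) ((hint c').sub (hint c)),
      Function.support_eq_univ fun x => (hlt x).ne']
    exact Measure.measure_univ_pos.2 (NeZero.ne μ)
  rw [integral_sub (hint c') (hint c)] at hpos
  exact sub_pos.1 hpos

theorem tendsto_integral_comp_const_add_atBot
    (hint : ∀ c, Integrable (fun x => f (c + g x)) μ) (hmono : Monotone f) (hf0 : ∀ s, 0 ≤ f s)
    (hf : Tendsto f atBot (𝓝 0)) : Tendsto (fun c => ∫ x, f (c + g x) ∂μ) atBot (𝓝 0) := by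
  have := tendsto_integral_filter_of_dominated_convergence (fun x => f (0 + g x))
    (.of_forall fun c => (hint c).aestronglyMeasurable) ?_ (hint 0)
    (.of_forall fun x => hf.comp (tendsto_atBot_add_const_right _ (g x) tendsto_id))
  · simpa using this
  filter_upwards [eventually_le_atBot 0] with c hc
  exact .of_forall fun x => by rw [Real.norm_of_nonneg (hf0 _)]; exact hmono (by linarith)

theorem tendsto_integral_comp_const_add_atTop [IsFiniteMeasure μ] [NeZero μ]
    (hint : ∀ c, Integrable (fun x => f (c + g x)) μ) (hf0 : ∀ s, 0 ≤ f s)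
    (hf : Tendsto f atTop atTop) : Tendsto (fun c => ∫ x, f (c + g x) ∂μ) atTop atTop := by
  refine tendsto_atTop.2 fun B => ?_
  obtain ⟨M, hM⟩ := exists_nat_gt (B / μ.real univ)
  rw [div_lt_iff₀ measureReal_univ_pos] at hM
  have htrunc : Tendsto (fun c => ∫ x, min (f (c + g x)) M ∂μ) atTop (𝓝 (M * μ.real univ)) := by
    have := tendsto_integral_filter_of_dominated_convergence
      (F := fun c x => min (f (c + g x)) M) (fun _ => (M : ℝ))
      (.of_forall fun c => (hint c).aestronglyMeasurable.inf aestronglyMeasurable_const)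
      (.of_forall fun c => .of_forall fun x => by
        rw [Real.norm_of_nonneg (le_min (hf0 _) M.cast_nonneg)]; exact min_le_right _ _)
      (integrable_const _)
      (.of_forall fun x => tendsto_nhds_of_eventually_eq <|
        ((hf.comp (tendsto_atTop_add_const_right _ (g x) tendsto_id)).eventually_ge_atTop M).mono
          fun c hc => min_eq_right hc)
    simpa [mul_comm] using this
  filter_upwards [htrunc.eventually (eventually_ge_nhds hM)] with c hc
  exact hc.trans (integral_mono_of_nonneg (.of_forall fun x => le_min (hf0 _) M.cast_nonneg)
    (hint c) (.of_forall fun x => min_le_left _ _))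

end IntegralCompConstAdd

theorem existsUnique_eq_of_strictMono {η : ℝ → ℝ} {l : ℝ} (hcont : Continuous η)
    (hmono : StrictMono η) (hbot : Tendsto η atBot (𝓝 l)) (htop : Tendsto η atTop atTop)
    {y : ℝ} (hy : l < y) :
    ∃! c, η c = y :=
  existsUnique_of_exists_of_unique
    (mem_range_of_exists_le_of_exists_ge hcont
      ((hbot.eventually (eventually_le_nhds hy)).exists) (htop.eventually_ge_atTop y).exists)
    fun _ _ h₁ h₂ => hmono.injective (h₁.trans h₂.symm)

theorem stmt12_general (σ : ℝ → ℝ) (lam a : ℝ) (hlam : 0 < lam)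
    (hmono : StrictMonoOn σ (Set.Ioi 0))
    (hgrow : ∀ v : ℝ, 1 ≤ v → a + lam * v ≤ σ v + 2 * lam * v)
    (hinv : ℝ → ℝ)
    (hinv_pos : ∀ s : ℝ, 0 < hinv s)
    (hinv_right : ∀ s : ℝ, σ (hinv s) + 2 * lam * hinv s = s)
    (hinv_left : ∀ v : ℝ, 0 < v → hinv (σ v + 2 * lam * v) = v)
    (g : ℝ → ℝ) (hg : MemLp g 2 (volume.restrict (Set.Ioo (0:ℝ) 1))) :
    (∀ c : ℝ, IntegrableOn (fun x => hinv (c + g x)) (Set.Ioo 0 1)) ∧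
    Continuous (fun c => ∫ x in Set.Ioo (0:ℝ) 1, hinv (c + g x)) ∧
    StrictMono (fun c => ∫ x in Set.Ioo (0:ℝ) 1, hinv (c + g x)) ∧
    Filter.Tendsto (fun c => ∫ x in Set.Ioo (0:ℝ) 1, hinv (c + g x))
      Filter.atBot (nhds 0) ∧
    Filter.Tendsto (fun c => ∫ x in Set.Ioo (0:ℝ) 1, hinv (c + g x))
      Filter.atTop Filter.atTop ∧
    ∀ μ : ℝ, 0 < μ → ∃! c : ℝ, (∫ x in Set.Ioo (0:ℝ) 1, hinv (c + g x)) = μ := by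
  have hh : StrictMonoOn (fun v => σ v + 2 * lam * v) (Ioi 0) :=
    hmono.add ((strictMono_mul_left_of_pos (by positivity)).strictMonoOn _)
  have hinv_mono : StrictMono hinv := hh.strictMono_of_rightInverse hinv_pos hinv_right
  have hrange : range hinv = Ioi 0 :=
    (range_subset_iff.2 hinv_pos).antisymm fun v hv => ⟨_, hinv_left v hv⟩
  have hinv_cont : Continuous hinv :=
    hinv_mono.monotone.continuous_of_isOpen_range (hrange ▸ isOpen_Ioi)
  have hinv_growth (s : ℝ) : |hinv s| ≤ (1 + |a| / lam) + lam⁻¹ * |s| := by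
    rw [abs_of_pos (hinv_pos s)]
    simpa only [hinv_right] using le_add_mul_abs_of_linear_lower_bound (v := hinv s) hlam hgrow
  have : IsProbabilityMeasure (volume.restrict (Ioo (0:ℝ) 1)) := ⟨by simp [Real.volume_Ioo]⟩
  have hint := integrable_comp_const_add_of_linear_growth (by positivity) hinv_cont hinv_growth
    (hg.integrable one_le_two)
  have hinv_nonneg (s : ℝ) : 0 ≤ hinv s := (hinv_pos s).le
  have hcont := continuous_integral_comp_const_add hint hinv_cont hinv_mono.monotone hinv_nonneg
  have hsm := strictMono_integral_comp_const_add hint hinv_mono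
  have hbot := tendsto_integral_comp_const_add_atBot hint hinv_mono.monotone hinv_nonneg
    (tendsto_atBot_isGLB hinv_mono.monotone (hrange ▸ isGLB_Ioi))
  have htop := tendsto_integral_comp_const_add_atTop hint hinv_nonneg
    (tendsto_atTop_atTop_of_monotone hinv_mono.monotone fun b =>
      ⟨_, (hinv_left _ (lt_max_of_lt_right one_pos)).ge.trans' (le_max_left b 1)⟩)
  exact ⟨hint, hcont, hsm, hbot, htop,
    fun μ hμ => existsUnique_eq_of_strictMono hcont hsm hbot htop hμ⟩

/-- Solvability of the Euler–Lagrange constant: with `h(v) = σ(v) + 2λv` a continuous,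
strictly increasing bijection from `(0,∞)` onto `ℝ` (inverse `hinv`), the growth bound
`h(v) ≥ a + λv` for `v ≥ 1`, and `g ∈ L²(0,1)`, the function
`η(c) = ∫₀¹ hinv(c + g(x)) dx` is well defined, continuous, strictly increasing, tends to `0`
at `−∞` and to `∞` at `+∞`; in particular for each `μ > 0` there is a unique `c` with
`η(c) = μ`. -/
theorem stmt12 (σ : ℝ → ℝ) (lam a : ℝ) (hlam : 0 < lam)
    (hcont : ContinuousOn σ (Set.Ioi 0)) (hmono : StrictMonoOn σ (Set.Ioi 0))
    (hbot : Filter.Tendsto (fun v => σ v + 2 * lam * v) (nhdsWithin 0 (Set.Ioi 0))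
      Filter.atBot)
    (htop : Filter.Tendsto (fun v => σ v + 2 * lam * v) Filter.atTop Filter.atTop)
    (hgrow : ∀ v : ℝ, 1 ≤ v → a + lam * v ≤ σ v + 2 * lam * v)
    (hinv : ℝ → ℝ)
    (hinv_pos : ∀ s : ℝ, 0 < hinv s)
    (hinv_right : ∀ s : ℝ, σ (hinv s) + 2 * lam * hinv s = s)
    (hinv_left : ∀ v : ℝ, 0 < v → hinv (σ v + 2 * lam * v) = v)
    (g : ℝ → ℝ) (hg : MemLp g 2 (volume.restrict (Set.Ioo (0:ℝ) 1))) :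
    (∀ c : ℝ, IntegrableOn (fun x => hinv (c + g x)) (Set.Ioo 0 1)) ∧
    Continuous (fun c => ∫ x in Set.Ioo (0:ℝ) 1, hinv (c + g x)) ∧
    StrictMono (fun c => ∫ x in Set.Ioo (0:ℝ) 1, hinv (c + g x)) ∧
    Filter.Tendsto (fun c => ∫ x in Set.Ioo (0:ℝ) 1, hinv (c + g x))
      Filter.atBot (nhds 0) ∧
    Filter.Tendsto (fun c => ∫ x in Set.Ioo (0:ℝ) 1, hinv (c + g x))
      Filter.atTop Filter.atTop ∧
    ∀ μ : ℝ, 0 < μ → ∃! c : ℝ, (∫ x in Set.Ioo (0:ℝ) 1, hinv (c + g x)) = μ :=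
  stmt12_general σ lam a hlam hmono hgrow hinv hinv_pos hinv_right hinv_left g hg
end

section
/- Conversely, under the same hypotheses: if p ∈ L²(0,1) with p ≥ 0 a.e., ∫₀¹ W(p) dx < ∞, ∫₀¹ p dx = μ, p > 0 a.e., σ(p) ∈ L²(0,1), and ξ = σ(p) − c for some constant c, then ξ ∈ ∂φ(p), i.e., for all v ∈ L²(0,1) with v ≥ 0 a.e. and ∫₀¹ v dx = μ: ∫₀¹ (W(v) − W(p) − ξ(v − p) + (λ/2)(v − p)²) dx ≥ 0. -/
/-!
Since `W + (λ/2)·z²` is convex, its tangent at `p(x) > 0` lies below it, which gives the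
pointwise inequality `W(v) − W(p) − σ(p)(v − p) + (λ/2)(v − p)² ≥ 0`. Integrating it, the
remaining term `c (v − p)` contributes nothing because `p` and `v` have the same mean;
`σ(p), v − p ∈ L²` make every term integrable.
-/

open MeasureTheory

lemma ConvexOn.add_mul_sub_le_of_hasDerivAt {S : Set ℝ} {f : ℝ → ℝ} {f' x y : ℝ}
    (hf : ConvexOn ℝ S f) (hx : x ∈ S) (hy : y ∈ S) (hfx : HasDerivAt f f' x) :
    f x + f' * (y - x) ≤ f y := by
  rcases lt_trichotomy x y with hxy | rfl | hyx
  · have hslope := hf.le_slope_of_hasDerivAt hx hy hxy hfx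
    rw [slope_def_field, le_div_iff₀ (sub_pos.2 hxy)] at hslope
    linarith
  · simp
  · have hslope := hf.slope_le_of_hasDerivAt hy hx hyx hfx
    rw [slope_def_field, div_le_iff₀ (sub_pos.2 hyx)] at hslope
    linarith

lemma sub_sub_mul_add_sq_nonneg_of_convexOn_add_sq {S : Set ℝ} {W : ℝ → ℝ} {lam w a b : ℝ}
    (hconv : ConvexOn ℝ S (fun z => W z + lam / 2 * z ^ 2)) (ha : a ∈ S) (hb : b ∈ S)
    (hW : HasDerivAt W w a) :
    0 ≤ W b - W a - w * (b - a) + lam / 2 * (b - a) ^ 2 := by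
  have hsq : HasDerivAt (fun z => lam / 2 * z ^ 2) (lam * a) a :=
    ((hasDerivAt_pow 2 a).const_mul (lam / 2)).congr_deriv (by ring)
  have htangent := hconv.add_mul_sub_le_of_hasDerivAt ha hb (hW.add hsq)
  linear_combination htangent

theorem stmt14_general (W σ : ℝ → ℝ) (lam μ c : ℝ)
    (hconv : ConvexOn ℝ (Set.Ici 0) (fun z => W z + lam / 2 * z ^ 2))
    (hderiv : ∀ z : ℝ, 0 < z → HasDerivAt W (σ z) z)
    (p ξ : ℝ → ℝ)
    (hp2 : MemLp p 2 (volume.restrict (Set.Ioo (0:ℝ) 1)))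
    (hppos : ∀ᵐ x ∂(volume.restrict (Set.Ioo (0:ℝ) 1)), 0 < p x)
    (hpW : IntegrableOn (fun x => W (p x)) (Set.Ioo 0 1))
    (hpmean : (∫ x in Set.Ioo (0:ℝ) 1, p x) = μ)
    (hσp2 : MemLp (fun x => σ (p x)) 2 (volume.restrict (Set.Ioo (0:ℝ) 1)))
    (hξ : ∀ x, ξ x = σ (p x) - c) :
    ∀ v : ℝ → ℝ, MemLp v 2 (volume.restrict (Set.Ioo (0:ℝ) 1)) →
      (∀ᵐ x ∂(volume.restrict (Set.Ioo (0:ℝ) 1)), 0 ≤ v x) →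
      (∫ x in Set.Ioo (0:ℝ) 1, v x) = μ →
      IntegrableOn (fun x => W (v x)) (Set.Ioo 0 1) →
      (∫ x in Set.Ioo (0:ℝ) 1,
        (W (v x) - W (p x) - ξ x * (v x - p x) + lam / 2 * (v x - p x) ^ 2)) ≥ 0 := by
  intro v hv2 hvnn hvmean hvW
  set ν := volume.restrict (Set.Ioo (0:ℝ) 1)
  have hp : Integrable p ν := hp2.integrable one_le_two
  have hv : Integrable v ν := hv2.integrable one_le_two
  have hgap_nonneg : ∀ᵐ x ∂ν,
      0 ≤ W (v x) - W (p x) - σ (p x) * (v x - p x) + lam / 2 * (v x - p x) ^ 2 := by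
    filter_upwards [hppos, hvnn] with x hpx hvx
    exact sub_sub_mul_add_sq_nonneg_of_convexOn_add_sq hconv hpx.le hvx (hderiv _ hpx)
  have hgap_int : Integrable
      (fun x => W (v x) - W (p x) - σ (p x) * (v x - p x) + lam / 2 * (v x - p x) ^ 2) ν :=
    ((hvW.sub hpW).sub (hσp2.integrable_mul (hv2.sub hp2))).add
      ((hv2.sub hp2).integrable_sq.const_mul _)
  have hdiff_int : Integrable (fun x => c * (v x - p x)) ν := (hv.sub hp).const_mul c
  have hmean_diff : ∫ x, c * (v x - p x) ∂ν = 0 := by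
    rw [integral_const_mul, integral_sub hv hp, hvmean, hpmean, sub_self, mul_zero]
  calc (∫ x, (W (v x) - W (p x) - ξ x * (v x - p x) + lam / 2 * (v x - p x) ^ 2) ∂ν)
      = (∫ x, (W (v x) - W (p x) - σ (p x) * (v x - p x) + lam / 2 * (v x - p x) ^ 2) ∂ν)
        + ∫ x, c * (v x - p x) ∂ν := by
        rw [← integral_add hgap_int hdiff_int]
        congr 1 with x
        rw [hξ]
        ring
    _ = ∫ x, (W (v x) - W (p x) - σ (p x) * (v x - p x) + lam / 2 * (v x - p x) ^ 2) ∂ν := by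
        rw [hmean_diff, add_zero]
    _ ≥ 0 := integral_nonneg_of_ae hgap_nonneg

/-- Characterization of the Fréchet subdifferential (sufficiency): if `W` is `λ`-convex and
differentiable on `(0,∞)` with `W' = σ`, `p ∈ L²(0,1)` with `p > 0` a.e., `∫₀¹ W(p) < ∞`,
`∫₀¹ p = μ`, `σ(p) ∈ L²(0,1)` and `ξ = σ(p) − c` for a constant `c`, then for every admissible
`v ≥ 0` a.e. with `∫₀¹ v = μ`:
`∫₀¹ (W(v) − W(p) − ξ(v − p) + (λ/2)(v − p)²) dx ≥ 0`, i.e. `ξ ∈ ∂φ(p)`. -/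
theorem stmt14 (W σ : ℝ → ℝ) (lam μ c : ℝ) (hlam : 0 ≤ lam) (hμ : 0 < μ)
    (hconv : ConvexOn ℝ (Set.Ici 0) (fun z => W z + lam / 2 * z ^ 2))
    (hderiv : ∀ z : ℝ, 0 < z → HasDerivAt W (σ z) z)
    (p ξ : ℝ → ℝ)
    (hp2 : MemLp p 2 (volume.restrict (Set.Ioo (0:ℝ) 1)))
    (hppos : ∀ᵐ x ∂(volume.restrict (Set.Ioo (0:ℝ) 1)), 0 < p x)
    (hpW : IntegrableOn (fun x => W (p x)) (Set.Ioo 0 1))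
    (hpmean : (∫ x in Set.Ioo (0:ℝ) 1, p x) = μ)
    (hσp2 : MemLp (fun x => σ (p x)) 2 (volume.restrict (Set.Ioo (0:ℝ) 1)))
    (hξ : ∀ x, ξ x = σ (p x) - c) :
    ∀ v : ℝ → ℝ, MemLp v 2 (volume.restrict (Set.Ioo (0:ℝ) 1)) →
      (∀ᵐ x ∂(volume.restrict (Set.Ioo (0:ℝ) 1)), 0 ≤ v x) →
      (∫ x in Set.Ioo (0:ℝ) 1, v x) = μ →
      IntegrableOn (fun x => W (v x)) (Set.Ioo 0 1) →
      (∫ x in Set.Ioo (0:ℝ) 1,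
        (W (v x) - W (p x) - ξ x * (v x - p x) + lam / 2 * (v x - p x) ^ 2)) ≥ 0 :=
  stmt14_general W σ lam μ c hconv hderiv p ξ hp2 hppos hpW hpmean hσp2 hξ
end

section
/- Consider the ODE in ℝ³ in cylindrical coordinates: ṙ = −r(1−r)² − r|z|, ż = −z|z|, θ̇ = r(r−1). Every solution with z(0) ≠ 0 converges to the origin as t → ∞, whereas the solution with z(0) = 0 and r(0) > 1 satisfies r(t) → 1, θ(t) → ∞ as t → ∞ (so its ω-limit set is the entire unit circle {r = 1, z = 0}). Thus a dense set of initial data yields convergence to a rest point while some solution does not converge to any rest point. -/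
/-!
The equation for `z` is decoupled, and `|z|` solves the Riccati equation `w' = -w²`, so
`|z t| = c / (1 + c t)` with `c = |z 0|`. This is exactly what makes `r t * (1 + c t)`
nonincreasing, whence `r → 0`.

If `z 0 = 0`, then `z ≡ 0`, and `s = r - 1` solves `s' = -r s²`. So `s` stays positive,
`(1 / s)' = r ≥ 1` forces `s → 0`, and `(θ + log s)' = 0` gives `θ = const - log s → ∞`.

Vanishing and positivity are propagated by uniqueness for the linear equation `f' = c(t) f`,
reading `z' = -|z| z` and `s' = (-r s) s` with continuous coefficients.
-/

open Set Filter Topology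

section LinearODE

variable {c f : ℝ → ℝ} {a b : ℝ}

theorem exists_lipschitzWith_mul_of_continuousOn (hc : ContinuousOn c (Icc a b)) :
    ∃ K : NNReal, ∀ t ∈ Icc a b, LipschitzWith K (fun x => c t * x) := by
  obtain ⟨C, hC⟩ := isCompact_Icc.exists_bound_of_continuousOn hc
  refine ⟨C.toNNReal, fun t ht => (lipschitzWith_smul (c t)).weaken ?_⟩
  rw [← NNReal.coe_le_coe, coe_nnnorm, Real.coe_toNNReal']
  exact le_max_of_le_left (hC t ht)

variable (hf : ∀ t ∈ Icc a b, HasDerivAt f (c t * f t) t) (hc : ContinuousOn c (Icc a b))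
include hf hc

theorem eqOn_zero_of_hasDerivAt_mul_of_left_eq_zero (ha : f a = 0) : EqOn f 0 (Icc a b) := by
  obtain ⟨K, hK⟩ := exists_lipschitzWith_mul_of_continuousOn hc
  refine ODE_solution_unique_of_mem_Icc_right (v := fun t x => c t * x) (s := fun _ => univ)
    (fun t ht => (hK t (Ico_subset_Icc_self ht)).lipschitzOnWith)
    (fun t ht => (hf t ht).continuousAt.continuousWithinAt)
    (fun t ht => (hf t (Ico_subset_Icc_self ht)).hasDerivWithinAt) (fun _ _ => trivial)
    continuousOn_const (fun t _ => (hasDerivWithinAt_const t _ 0).congr_deriv (mul_zero _).symm)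
    (fun _ _ => trivial) ha

theorem eqOn_zero_of_hasDerivAt_mul_of_right_eq_zero (hb : f b = 0) : EqOn f 0 (Icc a b) := by
  obtain ⟨K, hK⟩ := exists_lipschitzWith_mul_of_continuousOn hc
  refine ODE_solution_unique_of_mem_Icc_left (v := fun t x => c t * x) (s := fun _ => univ)
    (fun t ht => (hK t (Ioc_subset_Icc_self ht)).lipschitzOnWith)
    (fun t ht => (hf t ht).continuousAt.continuousWithinAt)
    (fun t ht => (hf t (Ioc_subset_Icc_self ht)).hasDerivWithinAt) (fun _ _ => trivial)
    continuousOn_const (fun t _ => (hasDerivWithinAt_const t _ 0).congr_deriv (mul_zero _).symm)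
    (fun _ _ => trivial) hb

end LinearODE

section LinearODEHalfLine

variable {c f : ℝ → ℝ} {a : ℝ}
  (hf : ∀ t ∈ Ici a, HasDerivAt f (c t * f t) t) (hc : ContinuousOn c (Ici a))
include hf hc

theorem ne_zero_of_hasDerivAt_mul (ha : f a ≠ 0) : ∀ t ∈ Ici a, f t ≠ 0 := fun _ ht hft =>
  ha <| eqOn_zero_of_hasDerivAt_mul_of_right_eq_zero (fun s hs => hf s hs.1)
    (hc.mono Icc_subset_Ici_self) hft (left_mem_Icc.2 ht)

theorem pos_of_hasDerivAt_mul (ha : 0 < f a) : ∀ t ∈ Ici a, 0 < f t := by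
  intro t ht
  by_contra! hft
  obtain ⟨s, hs, hfs⟩ := intermediate_value_Icc' (mem_Ici.1 ht)
    (fun s hs => (hf s hs.1).continuousAt.continuousWithinAt) ⟨hft, ha.le⟩
  exact ne_zero_of_hasDerivAt_mul hf hc ha.ne' s hs.1 hfs

end LinearODEHalfLine

theorem le_of_hasDerivAt_le {f g f' g' : ℝ → ℝ} {a : ℝ}
    (hf : ∀ t ∈ Ici a, HasDerivAt f (f' t) t) (hg : ∀ t ∈ Ici a, HasDerivAt g (g' t) t)
    (ha : f a ≤ g a) (hle : ∀ t ∈ Ici a, f' t ≤ g' t) :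
    ∀ t ∈ Ici a, f t ≤ g t := fun _ ht =>
  image_le_of_deriv_right_le_deriv_boundary
    (fun s hs => (hf s hs.1).continuousAt.continuousWithinAt)
    (fun s hs => (hf s hs.1).hasDerivWithinAt) ha
    (fun s hs => (hg s hs.1).continuousAt.continuousWithinAt)
    (fun s hs => (hg s hs.1).hasDerivWithinAt) (fun s hs => hle s hs.1) (right_mem_Icc.2 ht)

theorem eq_of_hasDerivAt_eq {f g f' : ℝ → ℝ} {a : ℝ}
    (hf : ∀ t ∈ Ici a, HasDerivAt f (f' t) t) (hg : ∀ t ∈ Ici a, HasDerivAt g (f' t) t)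
    (ha : f a = g a) : ∀ t ∈ Ici a, f t = g t := fun t ht =>
  eq_of_has_deriv_right_eq (fun s hs => (hf s hs.1).hasDerivWithinAt)
    (fun s hs => (hg s hs.1).hasDerivWithinAt)
    (fun s hs => (hf s hs.1).continuousAt.continuousWithinAt)
    (fun s hs => (hg s hs.1).continuousAt.continuousWithinAt) ha t (right_mem_Icc.2 ht)

theorem inv_eq_inv_add_of_hasDerivAt_neg_sq {f : ℝ → ℝ} {a : ℝ}
    (hf : ∀ t ∈ Ici a, HasDerivAt f (-f t ^ 2) t) (hne : ∀ t ∈ Ici a, f t ≠ 0) :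
    ∀ t ∈ Ici a, (f t)⁻¹ = (f a)⁻¹ + (t - a) := by
  refine eq_of_hasDerivAt_eq (f' := fun _ => 1) (fun t ht => ?_)
    (fun t _ => ((hasDerivAt_id t).sub_const a).const_add _) (by simp)
  exact ((hf t ht).inv (hne t ht)).congr_deriv
    (by rw [neg_neg, div_self (pow_ne_zero 2 (hne t ht))])

section

variable {r z : ℝ → ℝ}

theorem continuousOn_neg_abs (hz : ∀ t ∈ Ici 0, HasDerivAt z (-z t * |z t|) t) :
    ContinuousOn (fun t => -|z t|) (Ici 0) := fun t ht =>
  (hz t ht).continuousAt.abs.neg.continuousWithinAt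

theorem eq_zero_of_hasDerivAt_neg_mul_abs (hz : ∀ t ∈ Ici 0, HasDerivAt z (-z t * |z t|) t)
    (hz0 : z 0 = 0) : ∀ t ∈ Ici 0, z t = 0 := fun t ht =>
  eqOn_zero_of_hasDerivAt_mul_of_left_eq_zero (c := fun t => -|z t|)
    (fun s hs => (hz s hs.1).congr_deriv (by ring))
    ((continuousOn_neg_abs hz).mono Icc_subset_Ici_self) hz0 (right_mem_Icc.2 ht)

theorem abs_inv_eq_of_hasDerivAt_neg_mul_abs (hz : ∀ t ∈ Ici 0, HasDerivAt z (-z t * |z t|) t)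
    (hz0 : z 0 ≠ 0) : ∀ t ∈ Ici 0, |z t|⁻¹ = |z 0|⁻¹ + t := by
  have hne : ∀ t ∈ Ici 0, z t ≠ 0 := ne_zero_of_hasDerivAt_mul (c := fun t => -|z t|)
    (fun t ht => (hz t ht).congr_deriv (by ring)) (continuousOn_neg_abs hz) hz0
  have habs : ∀ t ∈ Ici 0, HasDerivAt (fun t => |z t|) (-|z t| ^ 2) t := fun t ht =>
    ((hasDerivAt_abs (hne t ht)).comp t (hz t ht)).congr_deriv (by
      rw [neg_mul, mul_neg, ← mul_assoc, sign_mul_self]; ring)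
  intro t ht
  simpa using inv_eq_inv_add_of_hasDerivAt_neg_sq habs (fun t ht => abs_ne_zero.2 (hne t ht)) t ht

theorem mul_one_add_le_of_hasDerivAt
    (hr : ∀ t ∈ Ici 0, HasDerivAt r (-r t * (1 - r t) ^ 2 - r t * |z t|) t)
    (hrnn : ∀ t ∈ Ici 0, 0 ≤ r t) (hz : ∀ t ∈ Ici 0, |z t|⁻¹ = |z 0|⁻¹ + t)
    (hz0 : z 0 ≠ 0) :
    ∀ t ∈ Ici 0, r t * (1 + |z 0| * t) ≤ r 0 := by
  set c := |z 0|
  have hc : 0 < c := abs_pos.2 hz0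
  have hzc : ∀ t ∈ Ici 0, |z t| * (1 + c * t) = c := fun t ht => by
    have hpos : 0 < |z t|⁻¹ := hz t ht ▸ add_pos_of_pos_of_nonneg (inv_pos.2 hc) ht
    calc |z t| * (1 + c * t) = c * (|z t| * (c⁻¹ + t)) := by field_simp
      _ = c := by rw [← hz t ht, mul_inv_cancel₀ (inv_pos.1 hpos).ne', mul_one]
  refine le_of_hasDerivAt_le (g := fun _ => r 0) (g' := fun _ => 0)
    (fun t ht => (hr t ht).mul (((hasDerivAt_id t).const_mul c).const_add 1))
    (fun t _ => hasDerivAt_const t _) (by simp) fun t ht => ?_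
  have hdecay : 0 ≤ r t * (1 - r t) ^ 2 * (1 + c * t) := by
    have := hrnn t ht; have : (0:ℝ) ≤ t := ht; positivity
  calc _ = -(r t * (1 - r t) ^ 2 * (1 + c * t)) - r t * (|z t| * (1 + c * t) - c) := by ring
    _ ≤ 0 := by rw [hzc t ht, sub_self, mul_zero, sub_zero, neg_nonpos]; exact hdecay

theorem tendsto_zero_of_hasDerivAt_of_ne_zero
    (hr : ∀ t ∈ Ici 0, HasDerivAt r (-r t * (1 - r t) ^ 2 - r t * |z t|) t)
    (hz : ∀ t ∈ Ici 0, HasDerivAt z (-z t * |z t|) t) (hrnn : ∀ t ∈ Ici 0, 0 ≤ r t)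
    (hz0 : z 0 ≠ 0) : Tendsto r atTop (𝓝 0) ∧ Tendsto z atTop (𝓝 0) := by
  have hzinv := abs_inv_eq_of_hasDerivAt_neg_mul_abs hz hz0
  have hc : 0 < |z 0| := abs_pos.2 hz0
  constructor
  · have hbound := mul_one_add_le_of_hasDerivAt hr hrnn hzinv hz0
    have hlin : Tendsto (fun t => 1 + |z 0| * t) atTop atTop :=
      tendsto_atTop_add_const_left _ _ (tendsto_id.const_mul_atTop hc)
    refine tendsto_of_tendsto_of_tendsto_of_le_of_le' tendsto_const_nhds
      (tendsto_const_nhds (x := r 0) |>.div_atTop hlin) ?_ ?_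
    · filter_upwards [eventually_ge_atTop 0] with t ht using hrnn t ht
    · filter_upwards [eventually_ge_atTop 0] with t ht
      exact (le_div_iff₀ (by positivity)).2 (hbound t ht)
  · have hzinv_top : Tendsto (fun t => |z t|⁻¹) atTop atTop := by
      refine (tendsto_atTop_add_const_left _ |z 0|⁻¹ tendsto_id).congr' ?_
      filter_upwards [eventually_ge_atTop 0] with t ht using (hzinv t ht).symm
    rw [tendsto_zero_iff_abs_tendsto_zero]
    exact hzinv_top.inv_tendsto_atTop.congr fun t => inv_inv _

end

section

variable {r θ : ℝ → ℝ} (hr : ∀ t ∈ Ici 0, HasDerivAt r (-r t * (1 - r t) ^ 2) t)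
include hr

theorem one_lt_of_hasDerivAt_neg_mul_sq (hr0 : 1 < r 0) : ∀ t ∈ Ici 0, 1 < r t := by
  have hs : ∀ t ∈ Ici 0, HasDerivAt (fun t => r t - 1) (-r t * (r t - 1) * (r t - 1)) t :=
    fun t ht => ((hr t ht).sub_const 1).congr_deriv (by ring)
  have hc : ContinuousOn (fun t => -r t * (r t - 1)) (Ici 0) := fun t ht => by
    have := (hr t ht).continuousAt
    exact ContinuousAt.continuousWithinAt (by fun_prop)
  intro t ht
  simpa using pos_of_hasDerivAt_mul hs hc (by simpa using hr0) t ht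

theorem sub_one_le_of_hasDerivAt_neg_mul_sq (hr1 : ∀ t ∈ Ici 0, 1 < r t) :
    ∀ t ∈ Ici 0, r t - 1 ≤ ((r 0 - 1)⁻¹ + t)⁻¹ := by
  have hs : ∀ t ∈ Ici 0, r t - 1 ≠ 0 := fun t ht => (sub_pos.2 (hr1 t ht)).ne'
  have hinv : ∀ t ∈ Ici 0, (r 0 - 1)⁻¹ + t ≤ (r t - 1)⁻¹ :=
    le_of_hasDerivAt_le (f' := fun _ => 1) (fun t _ => (hasDerivAt_id t).const_add _)
      (fun t ht => ((hr t ht).sub_const 1).inv (hs t ht)) (by simp)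
      (fun t ht => by
        rw [show (1 - r t) ^ 2 = (r t - 1) ^ 2 by ring, neg_mul, neg_neg,
          mul_div_cancel_right₀ _ (pow_ne_zero 2 (hs t ht))]
        exact (hr1 t ht).le)
  intro t ht
  exact (le_inv_comm₀ (add_pos_of_pos_of_nonneg (inv_pos.2 (sub_pos.2 (hr1 0 self_mem_Ici))) ht)
    (sub_pos.2 (hr1 t ht))).1 (hinv t ht)

theorem eq_sub_log_of_hasDerivAt_neg_mul_sq
    (hθ : ∀ t ∈ Ici 0, HasDerivAt θ (r t * (r t - 1)) t) (hr1 : ∀ t ∈ Ici 0, 1 < r t) :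
    ∀ t ∈ Ici 0, θ t = θ 0 + Real.log (r 0 - 1) - Real.log (r t - 1) := by
  refine eq_of_hasDerivAt_eq hθ (fun t ht => ?_) (by ring)
  have hs : r t - 1 ≠ 0 := (sub_pos.2 (hr1 t ht)).ne'
  refine (((hr t ht).sub_const 1).log hs).const_sub _ |>.congr_deriv ?_
  field_simp
  ring

theorem tendsto_of_hasDerivAt_neg_mul_sq_of_one_lt
    (hθ : ∀ t ∈ Ici 0, HasDerivAt θ (r t * (r t - 1)) t) (hr0 : 1 < r 0) :
    Tendsto r atTop (𝓝 1) ∧ Tendsto θ atTop atTop := by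
  have hr1 := one_lt_of_hasDerivAt_neg_mul_sq hr hr0
  have hs : Tendsto (fun t => r t - 1) atTop (𝓝[>] 0) := by
    refine tendsto_nhdsWithin_iff.2 ⟨?_, ?_⟩
    · refine tendsto_of_tendsto_of_tendsto_of_le_of_le' tendsto_const_nhds
        (tendsto_atTop_add_const_left _ (r 0 - 1)⁻¹ tendsto_id).inv_tendsto_atTop ?_ ?_
      · filter_upwards [eventually_ge_atTop 0] with t ht using (sub_pos.2 (hr1 t ht)).le
      · filter_upwards [eventually_ge_atTop 0] with t ht
        exact sub_one_le_of_hasDerivAt_neg_mul_sq hr hr1 t ht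
    · filter_upwards [eventually_ge_atTop 0] with t ht using sub_pos.2 (hr1 t ht)
  constructor
  · simpa using (hs.mono_right nhdsWithin_le_nhds).const_add 1
  · refine (tendsto_atTop_add_const_left _ (θ 0 + Real.log (r 0 - 1))
      (tendsto_neg_atBot_atTop.comp (Real.tendsto_log_nhdsGT_zero.comp hs))).congr' ?_
    filter_upwards [eventually_ge_atTop 0] with t ht
    rw [eq_sub_log_of_hasDerivAt_neg_mul_sq hr hθ hr1 t ht]
    rfl

end

/-- The counterexample ODE in cylindrical coordinates:
`ṙ = −r(1−r)² − r|z|`, `ż = −z|z|`, `θ̇ = r(r−1)`.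
Every solution with `z(0) ≠ 0` converges to the origin (`r → 0`, `z → 0`), whereas a solution
with `z(0) = 0`, `r(0) > 1` satisfies `r(t) → 1` and `θ(t) → ∞` as `t → ∞`, so it does not
converge to any rest point (its ω-limit set is the whole unit circle). -/
theorem stmt16 (r z θ : ℝ → ℝ)
    (hr : ∀ t : ℝ, 0 ≤ t → HasDerivAt r (-(r t) * (1 - r t) ^ 2 - r t * |z t|) t)
    (hz : ∀ t : ℝ, 0 ≤ t → HasDerivAt z (-(z t) * |z t|) t)
    (hθ : ∀ t : ℝ, 0 ≤ t → HasDerivAt θ (r t * (r t - 1)) t)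
    (hrnn : ∀ t : ℝ, 0 ≤ t → 0 ≤ r t) :
    (z 0 ≠ 0 →
      Filter.Tendsto r Filter.atTop (nhds 0) ∧ Filter.Tendsto z Filter.atTop (nhds 0)) ∧
    (z 0 = 0 → 1 < r 0 →
      Filter.Tendsto r Filter.atTop (nhds 1) ∧ Filter.Tendsto θ Filter.atTop Filter.atTop) := by
  refine ⟨tendsto_zero_of_hasDerivAt_of_ne_zero hr hz hrnn, fun hz0 hr0 =>
    tendsto_of_hasDerivAt_neg_mul_sq_of_one_lt (fun t ht => ?_) hθ hr0⟩
  simpa [eq_zero_of_hasDerivAt_neg_mul_abs hz hz0 t ht] using hr t ht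
end

section
/- Let z : (0,∞) → ℝ be a bounded C¹ solution of z'(t) = f(z(t)) + e(t), where f : ℝ → ℝ is continuous and not constant on any open interval, and e is continuous with e(t) → 0 as t → ∞. Then z(t) converges to some limit z_∞ as t → ∞, and f(z_∞) = 0. -/
/-!
Let `α ≤ β` be the lower and upper limits of the bounded solution `z`. If `f x > 0`, then,
since `e → 0`, at late times `z` can cross the level `x` only upwards, so once it is above `x`
it stays there; hence `x ∉ (α, β)`, and symmetrically when `f x < 0`. Thus `f` vanishes on
`(α, β)`, which forces `α = β` because `f` is nowhere locally constant. Finally, if `z → L`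
then `z' → f L`, and by the mean value theorem a convergent function cannot have a derivative
with a nonzero limit, so `f L = 0`.
-/

open Filter Set Topology

lemma eventually_le_of_frequently_le {z z' : ℝ → ℝ} {c : ℝ}
    (hz : ∀ᶠ t in atTop, HasDerivAt z (z' t) t)
    (hc : ∀ᶠ t in atTop, z t = c → z' t < 0)
    (hfreq : ∃ᶠ t in atTop, z t ≤ c) :
    ∀ᶠ t in atTop, z t ≤ c := by
  obtain ⟨a, ha⟩ := (hz.and hc).exists_forall_of_atTop
  obtain ⟨t₀, hzt₀, hat₀⟩ := (hfreq.and_eventually (eventually_ge_atTop a)).exists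
  have ha' : ∀ s ∈ Ici t₀, HasDerivAt z (z' s) s ∧ (z s = c → z' s < 0) :=
    fun s hs => ha s (hat₀.trans hs)
  filter_upwards [eventually_ge_atTop t₀] with t ht
  exact image_le_of_deriv_right_lt_deriv_boundary (B := fun _ => c) (B' := fun _ => 0)
    (fun s hs => (ha' s hs.1).1.continuousAt.continuousWithinAt)
    (fun s hs => (ha' s hs.1).1.hasDerivWithinAt) hzt₀ (fun _ => hasDerivAt_const _ c)
    (fun s hs => (ha' s hs.1).2) ⟨ht, le_rfl⟩

lemma eventually_ge_of_frequently_ge {z z' : ℝ → ℝ} {c : ℝ}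
    (hz : ∀ᶠ t in atTop, HasDerivAt z (z' t) t)
    (hc : ∀ᶠ t in atTop, z t = c → 0 < z' t)
    (hfreq : ∃ᶠ t in atTop, c ≤ z t) :
    ∀ᶠ t in atTop, c ≤ z t := by
  have hneg := eventually_le_of_frequently_le (z := -z) (z' := -z') (c := -c)
    (hz.mono fun _ h => h.neg) (hc.mono fun _ h h' => neg_neg_of_pos (h (neg_inj.1 h')))
    (hfreq.mono fun _ h => neg_le_neg h)
  exact hneg.mono fun _ h => neg_le_neg_iff.1 h

lemma eq_zero_of_tendsto_of_tendsto_deriv {z z' : ℝ → ℝ} {L m : ℝ}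
    (hz : ∀ᶠ t in atTop, HasDerivAt z (z' t) t)
    (hL : Tendsto z atTop (𝓝 L)) (hm : Tendsto z' atTop (𝓝 m)) : m = 0 := by
  obtain ⟨a, ha⟩ := hz.exists_forall_of_atTop
  have hmvt : ∀ t, ∃ ξ, a ≤ t → t < ξ ∧ z' ξ = z (t + 1) - z t := by
    intro t
    by_cases hat : a ≤ t
    · have hderiv : ∀ s ∈ Icc t (t + 1), HasDerivAt z (z' s) s := fun s hs => ha s (hat.trans hs.1)
      obtain ⟨ξ, hξ, hslope⟩ := exists_hasDerivAt_eq_slope z z' (lt_add_one t)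
        (fun s hs => (hderiv s hs).continuousAt.continuousWithinAt)
        (fun s hs => hderiv s (Ioo_subset_Icc_self hs))
      exact ⟨ξ, fun _ => ⟨hξ.1, by simpa using hslope⟩⟩
    · exact ⟨0, fun h => absurd h hat⟩
  choose ξ hξ using hmvt
  have hξ_top : Tendsto ξ atTop atTop :=
    tendsto_atTop_mono' atTop ((eventually_ge_atTop a).mono fun t ht => (hξ t ht).1.le) tendsto_id
  have hincr : Tendsto (fun t => z (t + 1) - z t) atTop (𝓝 (L - L)) :=
    (hL.comp (tendsto_atTop_add_const_right atTop 1 tendsto_id)).sub hL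
  rw [sub_self] at hincr
  refine tendsto_nhds_unique ((hm.comp hξ_top).congr' ?_) hincr
  exact (eventually_ge_atTop a).mono fun t ht => (hξ t ht).2

section PerturbedODE

variable {f e z : ℝ → ℝ}

lemma eventually_le_of_frequently_le_of_neg (he0 : Tendsto e atTop (𝓝 0))
    (hode : ∀ᶠ t in atTop, HasDerivAt z (f (z t) + e t) t) {c : ℝ} (hfc : f c < 0)
    (hfreq : ∃ᶠ t in atTop, z t ≤ c) : ∀ᶠ t in atTop, z t ≤ c := by
  refine eventually_le_of_frequently_le hode ?_ hfreq
  filter_upwards [he0.eventually (eventually_lt_nhds (neg_pos.2 hfc))] with t ht hzt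
  rw [hzt]
  linarith

lemma eventually_ge_of_frequently_ge_of_pos (he0 : Tendsto e atTop (𝓝 0))
    (hode : ∀ᶠ t in atTop, HasDerivAt z (f (z t) + e t) t) {c : ℝ} (hfc : 0 < f c)
    (hfreq : ∃ᶠ t in atTop, c ≤ z t) : ∀ᶠ t in atTop, c ≤ z t := by
  refine eventually_ge_of_frequently_ge hode ?_ hfreq
  filter_upwards [he0.eventually (eventually_gt_nhds (neg_lt_zero.2 hfc))] with t ht hzt
  rw [hzt]
  linarith

lemma apply_eq_zero_of_mem_Ioo_liminf_limsup (he0 : Tendsto e atTop (𝓝 0))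
    (hode : ∀ᶠ t in atTop, HasDerivAt z (f (z t) + e t) t)
    (hbdd : IsBoundedUnder (· ≤ ·) atTop fun t => |z t|) {x : ℝ}
    (hx : x ∈ Ioo (liminf z atTop) (limsup z atTop)) : f x = 0 := by
  obtain ⟨hle, hge⟩ := isBoundedUnder_le_abs.1 hbdd
  rcases lt_trichotomy (f x) 0 with hneg | hzero | hpos
  · have hfreq := (frequently_lt_of_liminf_lt hle.isCoboundedUnder_ge hx.1).mono fun _ h => h.le
    have hlimsup : limsup z atTop ≤ x := limsup_le_of_le hge.isCoboundedUnder_le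
      (eventually_le_of_frequently_le_of_neg he0 hode hneg hfreq)
    exact absurd hx.2 hlimsup.not_gt
  · exact hzero
  · have hfreq := (frequently_lt_of_lt_limsup hge.isCoboundedUnder_le hx.2).mono fun _ h => h.le
    have hliminf : x ≤ liminf z atTop := le_liminf_of_le hle.isCoboundedUnder_ge
      (eventually_ge_of_frequently_ge_of_pos he0 hode hpos hfreq)
    exact absurd hx.1 hliminf.not_gt

end PerturbedODE

theorem stmt17_general (f e z : ℝ → ℝ)
    (hf : Continuous f)
    (hfnc : ∀ a b : ℝ, a < b → ¬ ∃ k : ℝ, ∀ x ∈ Set.Ioo a b, f x = k)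
    (he0 : Filter.Tendsto e Filter.atTop (nhds 0))
    (hode : ∀ t : ℝ, 0 < t → HasDerivAt z (f (z t) + e t) t)
    (hbdd : ∃ M : ℝ, ∀ t : ℝ, 0 < t → |z t| ≤ M) :
    ∃ zinf : ℝ, Filter.Tendsto z Filter.atTop (nhds zinf) ∧ f zinf = 0 := by
  have hode' : ∀ᶠ t in atTop, HasDerivAt z (f (z t) + e t) t := (eventually_gt_atTop 0).mono hode
  obtain ⟨M, hM⟩ := hbdd
  have hbdd' : IsBoundedUnder (· ≤ ·) atTop fun t => |z t| :=
    isBoundedUnder_of_eventually_le ((eventually_gt_atTop 0).mono hM)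
  obtain ⟨hle, hge⟩ := isBoundedUnder_le_abs.1 hbdd'
  have hlim : liminf z atTop = limsup z atTop :=
    (liminf_le_limsup hle hge).eq_of_not_lt fun hlt =>
      hfnc _ _ hlt ⟨0, fun _ hx => apply_eq_zero_of_mem_Ioo_liminf_limsup he0 hode' hbdd' hx⟩
  have hL : Tendsto z atTop (𝓝 (limsup z atTop)) := tendsto_of_liminf_eq_limsup hlim rfl hle hge
  have hderiv : Tendsto (fun t => f (z t) + e t) atTop (𝓝 (f (limsup z atTop))) := by
    simpa using ((hf.tendsto _).comp hL).add he0
  exact ⟨_, hL, eq_zero_of_tendsto_of_tendsto_deriv hode' hL hderiv⟩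

/-- Pego's lemma: if `f : ℝ → ℝ` is continuous and not constant on any open interval,
`e` is continuous with `e(t) → 0` as `t → ∞`, and `z` is a bounded `C¹` solution of
`z' = f(z) + e` on `(0,∞)`, then `z(t) → z_∞` as `t → ∞` for some `z_∞` with `f(z_∞) = 0`. -/
theorem stmt17 (f e z : ℝ → ℝ)
    (hf : Continuous f)
    (hfnc : ∀ a b : ℝ, a < b → ¬ ∃ k : ℝ, ∀ x ∈ Set.Ioo a b, f x = k)
    (he : Continuous e)
    (he0 : Filter.Tendsto e Filter.atTop (nhds 0))
    (hode : ∀ t : ℝ, 0 < t → HasDerivAt z (f (z t) + e t) t)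
    (hbdd : ∃ M : ℝ, ∀ t : ℝ, 0 < t → |z t| ≤ M) :
    ∃ zinf : ℝ, Filter.Tendsto z Filter.atTop (nhds zinf) ∧ f zinf = 0 :=
  stmt17_general f e z hf hfnc he0 hode hbdd
end

section
/- Let p : (0,1) × [0,∞) → ℝ satisfy 0 < δ ≤ p(x,t) ≤ 1/δ for a.e. x and all t ≥ T₀, suppose σ : (0,∞) → ℝ is Lipschitz on [δ, 1/δ] with constant C₀, and suppose for a.e. x and all t ≥ s ≥ T₀: p(x,t) − p(x,s) = −∫ₛᵗ (σ(p(x,τ)) − ∫₀¹ σ(p(y,τ)) dy) dτ with ∫_{T₀}^∞ ‖p_t(·,t)‖²_{L²} dt < ∞. Then ‖p_t(·,t)‖²_{L²} is Lipschitz in t on [T₀,∞), and consequently ‖p_t(·,t)‖_{L²} → 0 as t → ∞. -/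
/-!
Since `p(·,t)` stays in the compact set where `σ` is Lipschitz, both terms of the integrand of the
equation are bounded by some `M`, so `t ↦ p(x,t)` is `2M`-Lipschitz for a.e. `x` and
`t ↦ σ(p(·,t))` is Lipschitz uniformly in `x`. The squared `L²` norm of the centred function is
then Lipschitz, as a difference of squares of bounded functions.

Decay follows from a general fact: if `F ≥ 0` is `K`-Lipschitz, then `F ≥ F(t)/2` on an interval
of length comparable to `F(t)/K` after `t`, so `F(t)² ≲ K ∫_t^∞ F`, and the tail of a convergent
integral tends to `0`.
-/

open MeasureTheory Set Filter Topology
open scoped NNReal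

section Decay

variable {F : ℝ → ℝ} {T₀ : ℝ} {K : ℝ≥0}

theorem LipschitzOnWith.mul_sub_le_integral_Ioi (hL : LipschitzOnWith K F (Ici T₀))
    (hF0 : ∀ t ∈ Ici T₀, 0 ≤ F t) (hint : IntegrableOn F (Ici T₀)) {t r : ℝ} (ht : T₀ ≤ t)
    (hr : 0 ≤ r) :
    r * (F t - K * r) ≤ ∫ τ in Ioi t, F τ := by
  have hsub : Ioi t ⊆ Ici T₀ := Ioi_subset_Ici ht
  calc r * (F t - K * r) = ∫ _ in Ioc t (t + r), (F t - K * r) := by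
        rw [setIntegral_const, Real.volume_real_Ioc_of_le (by linarith), smul_eq_mul]; ring
    _ ≤ ∫ τ in Ioc t (t + r), F τ := by
        refine setIntegral_mono_on (integrableOn_const measure_Ioc_lt_top.ne)
          (hint.mono_set (Ioc_subset_Ioi_self.trans hsub)) measurableSet_Ioc fun τ hτ => ?_
        have hLτ := hL.dist_le_mul t ht τ (hsub hτ.1)
        rw [Real.dist_eq, Real.dist_eq, abs_sub_comm t τ, abs_of_pos (sub_pos.2 hτ.1)] at hLτ
        have : (K : ℝ) * (τ - t) ≤ K * r := by gcongr; linarith [hτ.2]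
        linarith [le_abs_self (F t - F τ)]
    _ ≤ ∫ τ in Ioi t, F τ :=
        setIntegral_mono_set (hint.mono_set hsub)
          (ae_restrict_of_forall_mem measurableSet_Ioi fun τ hτ => hF0 τ (hsub hτ))
          Ioc_subset_Ioi_self.eventuallyLE

theorem LipschitzOnWith.tendsto_atTop_zero_of_integrableOn (hL : LipschitzOnWith K F (Ici T₀))
    (hF0 : ∀ t ∈ Ici T₀, 0 ≤ F t) (hint : IntegrableOn F (Ici T₀)) :
    Tendsto F atTop (𝓝 0) := by
  have hbound : ∀ t ∈ Ici T₀, F t ≤ √(4 * (K + 1) * ∫ τ in Ioi t, F τ) := by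
    intro t ht
    refine Real.le_sqrt_of_sq_le ?_
    have hFt := hF0 t ht
    set r := F t / (2 * (K + 1))
    have hr : 0 ≤ r := by positivity
    have hr' : 2 * (K + 1) * r = F t := mul_div_cancel₀ _ (by positivity)
    have := hL.mul_sub_le_integral_Ioi hF0 hint ht hr
    nlinarith [K.coe_nonneg]
  have htail : Tendsto (fun t => √(4 * (K + 1) * ∫ τ in Ioi t, F τ)) atTop (𝓝 0) := by
    simpa using ((tendsto_integral_Ioi_zero tendsto_id).const_mul (4 * ((K : ℝ) + 1))).sqrt
  exact squeeze_zero' ((eventually_ge_atTop T₀).mono hF0) ((eventually_ge_atTop T₀).mono hbound)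
    htail

end Decay

section ProbabilityMeasure

variable {α : Type*} [MeasurableSpace α] {μ : Measure α}

theorem LipschitzOnWith.aestronglyMeasurable_comp {σ : ℝ → ℝ} {s : Set ℝ} {C : ℝ≥0}
    (hσ : LipschitzOnWith C σ s) {u : α → ℝ} (hu : Measurable u) (hus : ∀ᵐ x ∂μ, u x ∈ s) :
    AEStronglyMeasurable (fun x => σ (u x)) μ := by
  obtain ⟨g, hg, hσg⟩ := hσ.extend_real
  refine (hg.continuous.measurable.comp hu).aestronglyMeasurable.congr ?_
  filter_upwards [hus] with x hx
  exact (hσg hx).symm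

variable [IsProbabilityMeasure μ]

theorem abs_integral_le_of_ae_abs_le {f : α → ℝ} {C : ℝ} (h : ∀ᵐ x ∂μ, |f x| ≤ C) :
    |∫ x, f x ∂μ| ≤ C := by
  simpa only [Real.norm_eq_abs, probReal_univ, mul_one] using
    norm_integral_le_of_norm_le_const (μ := μ) (f := f) (by simpa only [Real.norm_eq_abs] using h)

theorem abs_integral_sq_sub_integral_sq_le {u v : α → ℝ} {A B : ℝ}
    (hu : AEStronglyMeasurable u μ) (hv : AEStronglyMeasurable v μ)
    (huA : ∀ᵐ x ∂μ, |u x| ≤ A) (hvA : ∀ᵐ x ∂μ, |v x| ≤ A) (huv : ∀ᵐ x ∂μ, |u x - v x| ≤ B) :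
    |∫ x, u x ^ 2 ∂μ - ∫ x, v x ^ 2 ∂μ| ≤ 2 * A * B := by
  have hsq : ∀ {w : α → ℝ}, AEStronglyMeasurable w μ → (∀ᵐ x ∂μ, |w x| ≤ A) →
      Integrable (fun x => w x ^ 2) μ := fun {w} hw hwA =>
    Integrable.of_bound (hw.pow 2) (A ^ 2) <| by
      filter_upwards [hwA] with x hx
      rw [Real.norm_eq_abs, abs_pow]
      exact pow_le_pow_left₀ (abs_nonneg _) hx 2
  rw [← integral_sub (hsq hu huA) (hsq hv hvA)]
  refine abs_integral_le_of_ae_abs_le ?_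
  filter_upwards [huA, hvA, huv] with x hux hvx huvx
  calc |u x ^ 2 - v x ^ 2| = |u x - v x| * |u x + v x| := by rw [← abs_mul]; ring_nf
    _ ≤ B * (A + A) := by
        gcongr
        · exact (abs_nonneg _).trans huvx
        · exact (abs_add_le _ _).trans (add_le_add hux hvx)
    _ = 2 * A * B := by ring

theorem abs_integral_sq_centered_sub_le {f g : α → ℝ} {M ε : ℝ}
    (hf : AEStronglyMeasurable f μ) (hg : AEStronglyMeasurable g μ)
    (hfM : ∀ᵐ x ∂μ, |f x| ≤ M) (hgM : ∀ᵐ x ∂μ, |g x| ≤ M) (hfg : ∀ᵐ x ∂μ, |f x - g x| ≤ ε) :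
    |∫ x, (-f x + ∫ y, f y ∂μ) ^ 2 ∂μ - ∫ x, (-g x + ∫ y, g y ∂μ) ^ 2 ∂μ| ≤ 8 * M * ε := by
  have hfi : Integrable f μ := .of_bound hf M (by simpa only [Real.norm_eq_abs] using hfM)
  have hgi : Integrable g μ := .of_bound hg M (by simpa only [Real.norm_eq_abs] using hgM)
  have hcentered : ∀ {h : α → ℝ}, (∀ᵐ x ∂μ, |h x| ≤ M) →
      ∀ᵐ x ∂μ, |-h x + ∫ y, h y ∂μ| ≤ 2 * M := fun {h} hhM => by
    filter_upwards [hhM] with x hx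
    calc |-h x + ∫ y, h y ∂μ| ≤ |h x| + |∫ y, h y ∂μ| := by
          simpa only [abs_neg] using abs_add_le (-h x) (∫ y, h y ∂μ)
      _ ≤ 2 * M := by linarith [abs_integral_le_of_ae_abs_le hhM]
  have hmean : |∫ y, f y ∂μ - ∫ y, g y ∂μ| ≤ ε := by
    rw [← integral_sub hfi hgi]
    exact abs_integral_le_of_ae_abs_le hfg
  have hdiff : ∀ᵐ x ∂μ, |(-f x + ∫ y, f y ∂μ) - (-g x + ∫ y, g y ∂μ)| ≤ 2 * ε := by
    filter_upwards [hfg] with x hx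
    calc _ = |(∫ y, f y ∂μ - ∫ y, g y ∂μ) - (f x - g x)| := by ring_nf
      _ ≤ |∫ y, f y ∂μ - ∫ y, g y ∂μ| + |f x - g x| := abs_sub _ _
      _ ≤ 2 * ε := by linarith
  calc _ ≤ 2 * (2 * M) * (2 * ε) :=
        abs_integral_sq_sub_integral_sq_le (hf.neg.add_const _) (hg.neg.add_const _)
          (hcentered hfM) (hcentered hgM) hdiff
    _ = 8 * M * ε := by ring

end ProbabilityMeasure

section Relaxation

variable {α : Type*} [MeasurableSpace α] {μ : Measure α} [IsProbabilityMeasure μ]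
  {σ : ℝ → ℝ} {p : α → ℝ → ℝ} {s : Set ℝ} {M T₀ : ℝ}

theorem ae_abs_sub_le_of_eq_neg_integral (hs : MeasurableSet s) (hM : ∀ z ∈ s, |σ z| ≤ M)
    (hmeas : Measurable (Function.uncurry p)) (hbdd : ∀ t, T₀ ≤ t → ∀ᵐ x ∂μ, p x t ∈ s)
    (heq : ∀ t t', T₀ ≤ t → t ≤ t' → ∀ᵐ x ∂μ,
      p x t' - p x t = -∫ τ in t..t', (σ (p x τ) - ∫ y, σ (p y τ) ∂μ))
    {t t' : ℝ} (ht : T₀ ≤ t) (ht' : T₀ ≤ t') :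
    ∀ᵐ x ∂μ, |p x t' - p x t| ≤ 2 * M * |t' - t| := by
  wlog htt' : t ≤ t' generalizing t t'
  · simpa only [abs_sub_comm] using this ht' ht (le_of_not_ge htt')
  have hfubini : ∀ᵐ x ∂μ, ∀ᵐ τ ∂volume.restrict (Ici T₀), p x τ ∈ s :=
    (Measure.ae_ae_comm (p := fun x τ => p x τ ∈ s) (hmeas hs)).2
      (ae_restrict_of_forall_mem measurableSet_Ici hbdd)
  filter_upwards [hfubini, heq t t' ht htt'] with x hx hxeq
  rw [ae_restrict_iff' measurableSet_Ici] at hx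
  rw [hxeq, abs_neg, ← Real.norm_eq_abs]
  refine intervalIntegral.norm_integral_le_of_norm_le_const_ae ?_
  filter_upwards [hx] with τ hτs hτ
  rw [uIoc_of_le htt'] at hτ
  have hτT : T₀ ≤ τ := ht.trans hτ.1.le
  have hmean : |∫ y, σ (p y τ) ∂μ| ≤ M := abs_integral_le_of_ae_abs_le <| by
    filter_upwards [hbdd τ hτT] with y hy using hM _ hy
  calc ‖σ (p x τ) - ∫ y, σ (p y τ) ∂μ‖ ≤ |σ (p x τ)| + |∫ y, σ (p y τ) ∂μ| := abs_sub _ _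
    _ ≤ 2 * M := by linarith [hM _ (hτs hτT)]

theorem lipschitzOnWith_integral_sq_centered {C₀ : ℝ≥0} (hσ : LipschitzOnWith C₀ σ s)
    (hs : MeasurableSet s) (hM : ∀ z ∈ s, |σ z| ≤ M) (hmeas : Measurable (Function.uncurry p))
    (hbdd : ∀ t, T₀ ≤ t → ∀ᵐ x ∂μ, p x t ∈ s)
    (heq : ∀ t t', T₀ ≤ t → t ≤ t' → ∀ᵐ x ∂μ,
      p x t' - p x t = -∫ τ in t..t', (σ (p x τ) - ∫ y, σ (p y τ) ∂μ)) :
    LipschitzOnWith (16 * C₀ * M ^ 2).toNNReal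
      (fun t => ∫ x, (-σ (p x t) + ∫ y, σ (p y t) ∂μ) ^ 2 ∂μ) (Ici T₀) := by
  have hσp : ∀ t, T₀ ≤ t → ∀ᵐ x ∂μ, |σ (p x t)| ≤ M := fun t ht => by
    filter_upwards [hbdd t ht] with x hx using hM _ hx
  refine LipschitzOnWith.of_dist_le_mul fun t ht t' ht' => ?_
  rw [Real.dist_eq, Real.dist_eq, Real.coe_toNNReal _ (by positivity)]
  calc _ ≤ 8 * M * (C₀ * (2 * M * |t - t'|)) :=
        abs_integral_sq_centered_sub_le (hσ.aestronglyMeasurable_comp hmeas.of_uncurry_right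
          (hbdd t ht)) (hσ.aestronglyMeasurable_comp hmeas.of_uncurry_right (hbdd t' ht'))
          (hσp t ht) (hσp t' ht') <| by
        filter_upwards [hbdd t ht, hbdd t' ht',
          ae_abs_sub_le_of_eq_neg_integral hs hM hmeas hbdd heq ht' ht] with x hxt hxt' hx
        calc |σ (p x t) - σ (p x t')| ≤ C₀ * |p x t - p x t'| := by
              simpa only [Real.dist_eq] using hσ.dist_le_mul _ hxt _ hxt'
          _ ≤ C₀ * (2 * M * |t - t'|) := by gcongr
    _ = 16 * C₀ * M ^ 2 * |t - t'| := by ring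

end Relaxation

theorem stmt19_general (σ : ℝ → ℝ) (p : ℝ → ℝ → ℝ) (δ T₀ : ℝ)
    (C₀ : NNReal) (hσ : LipschitzOnWith C₀ σ (Set.Icc δ (1/δ)))
    (hmeas : Measurable (Function.uncurry p))
    (hbdd : ∀ t : ℝ, T₀ ≤ t → ∀ᵐ x ∂(volume.restrict (Set.Ioo (0:ℝ) 1)),
      δ ≤ p x t ∧ p x t ≤ 1/δ)
    (heq : ∀ s t : ℝ, T₀ ≤ s → s ≤ t →
      ∀ᵐ x ∂(volume.restrict (Set.Ioo (0:ℝ) 1)),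
        p x t - p x s =
          -∫ τ in s..t, (σ (p x τ) - ∫ y in Set.Ioo (0:ℝ) 1, σ (p y τ)))
    (hfin : IntegrableOn
      (fun t => ∫ x in Set.Ioo (0:ℝ) 1,
        (-σ (p x t) + ∫ y in Set.Ioo (0:ℝ) 1, σ (p y t)) ^ 2)
      (Set.Ici T₀)) :
    (∃ K : NNReal, LipschitzOnWith K
      (fun t => ∫ x in Set.Ioo (0:ℝ) 1,
        (-σ (p x t) + ∫ y in Set.Ioo (0:ℝ) 1, σ (p y t)) ^ 2)
      (Set.Ici T₀)) ∧
    Filter.Tendsto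
      (fun t => ∫ x in Set.Ioo (0:ℝ) 1,
        (-σ (p x t) + ∫ y in Set.Ioo (0:ℝ) 1, σ (p y t)) ^ 2)
      Filter.atTop (nhds 0) := by
  have : IsProbabilityMeasure (volume.restrict (Ioo (0:ℝ) 1)) := ⟨by simp⟩
  obtain ⟨M, hM⟩ := isCompact_Icc.exists_bound_of_continuousOn hσ.continuousOn
  have hlip := lipschitzOnWith_integral_sq_centered hσ measurableSet_Icc
    (fun z hz => by simpa only [Real.norm_eq_abs] using hM z hz) hmeas hbdd heq
  exact ⟨⟨_, hlip⟩, hlip.tendsto_atTop_zero_of_integrableOn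
    (fun t _ => integral_nonneg fun x => sq_nonneg _) hfin⟩

/-- Decay of the time derivative: if `δ ≤ p(x,t) ≤ 1/δ` for a.e. `x` and all `t ≥ T₀`, `σ` is
Lipschitz on `[δ,1/δ]`, `p` satisfies the integrated equation
`p(x,t) − p(x,s) = −∫ₛᵗ (σ(p(x,τ)) − ∫₀¹ σ(p(y,τ)) dy) dτ`, and
`∫_{T₀}^∞ ‖p_t(·,t)‖²_{L²} dt < ∞`, then `t ↦ ‖p_t(·,t)‖²_{L²}` is Lipschitz on `[T₀,∞)` and
`‖p_t(·,t)‖_{L²} → 0` as `t → ∞`.  Here `p_t(x,t) = −σ(p(x,t)) + ∫₀¹ σ(p(y,t)) dy`. -/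
theorem stmt19 (σ : ℝ → ℝ) (p : ℝ → ℝ → ℝ) (δ T₀ : ℝ) (hδ : 0 < δ) (hδ1 : δ ≤ 1)
    (C₀ : NNReal) (hσ : LipschitzOnWith C₀ σ (Set.Icc δ (1/δ)))
    (hmeas : Measurable (Function.uncurry p))
    (hbdd : ∀ t : ℝ, T₀ ≤ t → ∀ᵐ x ∂(volume.restrict (Set.Ioo (0:ℝ) 1)),
      δ ≤ p x t ∧ p x t ≤ 1/δ)
    (heq : ∀ s t : ℝ, T₀ ≤ s → s ≤ t →
      ∀ᵐ x ∂(volume.restrict (Set.Ioo (0:ℝ) 1)),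
        p x t - p x s =
          -∫ τ in s..t, (σ (p x τ) - ∫ y in Set.Ioo (0:ℝ) 1, σ (p y τ)))
    (hfin : IntegrableOn
      (fun t => ∫ x in Set.Ioo (0:ℝ) 1,
        (-σ (p x t) + ∫ y in Set.Ioo (0:ℝ) 1, σ (p y t)) ^ 2)
      (Set.Ici T₀)) :
    (∃ K : NNReal, LipschitzOnWith K
      (fun t => ∫ x in Set.Ioo (0:ℝ) 1,
        (-σ (p x t) + ∫ y in Set.Ioo (0:ℝ) 1, σ (p y t)) ^ 2)
      (Set.Ici T₀)) ∧
    Filter.Tendsto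
      (fun t => ∫ x in Set.Ioo (0:ℝ) 1,
        (-σ (p x t) + ∫ y in Set.Ioo (0:ℝ) 1, σ (p y t)) ^ 2)
      Filter.atTop (nhds 0) :=
  stmt19_general σ p δ T₀ C₀ hσ hmeas hbdd heq hfin
end
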